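/- arXiv:1711.07501 — 5 statements merged into one kernel-verified Lean document; each statement's English description precedes it below -/
import Mathlib

section
/- For every integer n ≥ 1 and every x in a sufficiently small neighborhood of x₀, writing D_n(x) = f_y(x, y(x))^{2n−1} · y^{(n)}(x), one has f_y(x, y(x))^{2n+1} · y^{(n+1)}(x) = f_y(x, y(x))^2 · (d/dx)D_n(x) − (2n−1) · (f_{yx}(x, y(x)) · f_y(x, y(x)) − f_{yy}(x, y(x)) · f_x(x, y(x))) · D_n(x). Moreover, for such x, f_y(x, y(x)) · (d/dx)[f_y(x, y(x))] = f_{yx}(x, y(x)) · f_y(x, y(x)) − f_{yy}(x, y(x)) · f_x(x, y(x)). -/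
open Filter Topology

/-- `pd f p r` is the mixed partial derivative `∂^(p+r) f / ∂x^p ∂y^r` of a function
of two real variables. -/
noncomputable def pd (f : ℝ → ℝ → ℝ) (p r : ℕ) : ℝ → ℝ → ℝ :=
  fun x y => iteratedDeriv p (fun x' => iteratedDeriv r (fun y' => f x' y') y) x

/-- `Delta f l g = Σ_{j=0}^{l} (−1)^j C(l,j) g_{x^{l−j} y^j} f_x^j f_y^{l−j}`. -/
noncomputable def Delta (f : ℝ → ℝ → ℝ) (l : ℕ) (g : ℝ → ℝ → ℝ) : ℝ → ℝ → ℝ :=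
  fun x y => ∑ j ∈ Finset.range (l + 1),
    (-1 : ℝ) ^ j * (l.choose j : ℝ) * pd g (l - j) j x y *
      (pd f 1 0 x y) ^ j * (pd f 0 1 x y) ^ (l - j)

lemma pd01_eq (f : ℝ → ℝ → ℝ) (x y : ℝ) : pd f 0 1 x y = deriv (f x) y := by
  simp [pd]

lemma pd10_eq (f : ℝ → ℝ → ℝ) (x y : ℝ) : pd f 1 0 x y = deriv (fun x' => f x' y) x := by
  simp [pd]

lemma pd11_eq (f : ℝ → ℝ → ℝ) (x y : ℝ) :
    pd f 1 1 x y = deriv (fun x' => deriv (f x') y) x := by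
  simp [pd]

lemma pd02_eq (f : ℝ → ℝ → ℝ) (x y : ℝ) : pd f 0 2 x y = deriv (fun y' => deriv (f x) y') y := by
  simp [pd, iteratedDeriv_succ, iteratedDeriv_one]

-- iterated deriv differentiability on open set
lemma hasDerivAt_iteratedDeriv {y : ℝ → ℝ} {V : Set ℝ} (hV : IsOpen V)
    (hy : ContDiffOn ℝ (⊤ : ℕ∞) y V) (n : ℕ) {x : ℝ} (hx : x ∈ V) :
    HasDerivAt (iteratedDeriv n y) (iteratedDeriv (n + 1) y x) x := by
  have hd : DifferentiableOn ℝ (iteratedDerivWithin n y V) V :=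
    hy.differentiableOn_iteratedDerivWithin (by exact_mod_cast lt_top_iff_ne_top.2 (by simp))
      hV.uniqueDiffOn
  have heq : Set.EqOn (iteratedDerivWithin n y V) (iteratedDeriv n y) V := fun z hz => by
    rw [iteratedDerivWithin_eq_iteratedFDerivWithin, iteratedDeriv_eq_iteratedFDeriv,
      iteratedFDerivWithin_of_isOpen n hV hz]
  have hda : DifferentiableAt ℝ (iteratedDeriv n y) x :=
    ((hd x hx).differentiableAt (hV.mem_nhds hx)).congr_of_eventuallyEq
      (heq.eventuallyEq_of_mem (hV.mem_nhds hx)).symm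
  have := hda.hasDerivAt
  rwa [← iteratedDeriv_succ] at this

-- chain rule
lemma hasDerivAt_comp2 {F : ℝ → ℝ → ℝ} {x : ℝ} {y : ℝ → ℝ} {y' : ℝ}
    (hF : ContDiffAt ℝ (⊤ : ℕ∞) (Function.uncurry F) (x, y x))
    (hy : HasDerivAt y y' x) :
    HasDerivAt (fun x' => F x' (y x'))
      (pd F 1 0 x (y x) + pd F 0 1 x (y x) * y') x := by
  set L := fderiv ℝ (Function.uncurry F) (x, y x) with hL
  have hd : HasFDerivAt (Function.uncurry F) L (x, y x) :=
    (hF.differentiableAt (by simp)).hasFDerivAt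
  have hcurve : HasDerivAt (fun x' => (x', y x')) (1, y') x :=
    HasDerivAt.prodMk (hasDerivAt_id x) hy
  have hmain : HasDerivAt (fun x' => F x' (y x')) (L (1, y')) x :=
    by have := hd.comp_hasDerivAt x hcurve; exact this
  have h10 : HasDerivAt (fun x' => F x' (y x)) (L (1, 0)) x :=
    by have := hd.comp_hasDerivAt x (HasDerivAt.prodMk (hasDerivAt_id x) (hasDerivAt_const x (y x))); exact this
  have h01 : HasDerivAt (fun y'' => F x y'') (L (0, 1)) (y x) :=
    by have := hd.comp_hasDerivAt (y x) (HasDerivAt.prodMk (hasDerivAt_const (y x) x) (hasDerivAt_id (y x))); exact this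
  have e10 : pd F 1 0 x (y x) = L (1, 0) := by rw [pd10_eq]; exact h10.deriv
  have e01 : pd F 0 1 x (y x) = L (0, 1) := by rw [pd01_eq]; exact h01.deriv
  have : L (1, y') = L (1, 0) + y' * L (0, 1) := by
    have : ((1 : ℝ), y') = (1, 0) + y' • (0, 1) := by simp
    rw [this, map_add, map_smul]; simp [smul_eq_mul]
  rw [e10, e01, mul_comm, ← this]
  exact hmain

-- contdiff of pd f 0 1 on open set
lemma contDiffOn_pd01 {F : ℝ → ℝ → ℝ} {U : Set (ℝ × ℝ)} (hU : IsOpen U)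
    (hF : ContDiffOn ℝ (⊤ : ℕ∞) (Function.uncurry F) U) :
    ContDiffOn ℝ (⊤ : ℕ∞) (Function.uncurry (pd F 0 1)) U := by
  have h1 : ContDiffOn ℝ (⊤ : ℕ∞)
      (fun p : ℝ × ℝ => fderiv ℝ (Function.uncurry F) p ((0 : ℝ), (1 : ℝ))) U := by
    exact (hF.fderiv_of_isOpen hU (by exact_mod_cast le_top)).clm_apply contDiffOn_const
  refine h1.congr fun p hp => ?_
  have hd : HasFDerivAt (Function.uncurry F) (fderiv ℝ (Function.uncurry F) p) p :=
    ((hF p hp).contDiffAt (hU.mem_nhds hp)).differentiableAt (by simp)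
      |>.hasFDerivAt
  have h01 : HasDerivAt (fun y'' => F p.1 y'') (fderiv ℝ (Function.uncurry F) p (0, 1)) p.2 := by
    have := hd.comp_hasDerivAt p.2 (HasDerivAt.prodMk (hasDerivAt_const p.2 p.1) (hasDerivAt_id p.2))
    exact this
  show pd F 0 1 p.1 p.2 = _
  rw [pd01_eq]
  exact h01.deriv

theorem statement0 (f : ℝ → ℝ → ℝ) (x₀ y₀ : ℝ) (y : ℝ → ℝ)
    (hf : ∀ᶠ p in 𝓝 (x₀, y₀), ContDiffAt ℝ (⊤ : ℕ∞) (Function.uncurry f) p)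
    (hf0 : f x₀ y₀ = 0) (hfy : pd f 0 1 x₀ y₀ ≠ 0)
    (hy : ∀ᶠ x in 𝓝 x₀, ContDiffAt ℝ (⊤ : ℕ∞) y x)
    (hy0 : y x₀ = y₀)
    (himp : ∀ᶠ x in 𝓝 x₀, f x (y x) = 0)
    (n : ℕ) (hn : 1 ≤ n) :
    ∀ᶠ x in 𝓝 x₀,
      (pd f 0 1 x (y x)) ^ (2 * n + 1) * iteratedDeriv (n + 1) y x =
        (pd f 0 1 x (y x)) ^ 2 *
          deriv (fun x' => (pd f 0 1 x' (y x')) ^ (2 * n - 1) * iteratedDeriv n y x') x -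
        (2 * (n : ℝ) - 1) *
          (pd f 1 1 x (y x) * pd f 0 1 x (y x) - pd f 0 2 x (y x) * pd f 1 0 x (y x)) *
          ((pd f 0 1 x (y x)) ^ (2 * n - 1) * iteratedDeriv n y x) ∧
      pd f 0 1 x (y x) * deriv (fun x' => pd f 0 1 x' (y x')) x =
        pd f 1 1 x (y x) * pd f 0 1 x (y x) - pd f 0 2 x (y x) * pd f 1 0 x (y x) := by
  -- extract open sets
  obtain ⟨U, hUmem, hU⟩ := Filter.eventually_iff_exists_mem.1 hf
  obtain ⟨V, hVmem, hV⟩ := Filter.eventually_iff_exists_mem.1 hy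
  obtain ⟨W, hWmem, hW⟩ := Filter.eventually_iff_exists_mem.1 himp
  set U' := interior U with hU'def
  set V' := interior V with hV'def
  set W' := interior W with hW'def
  have hU'open : IsOpen U' := isOpen_interior
  have hV'open : IsOpen V' := isOpen_interior
  have hW'open : IsOpen W' := isOpen_interior
  have hx₀U' : (x₀, y₀) ∈ U' := mem_interior_iff_mem_nhds.2 hUmem
  have hx₀V' : x₀ ∈ V' := mem_interior_iff_mem_nhds.2 hVmem
  have hx₀W' : x₀ ∈ W' := mem_interior_iff_mem_nhds.2 hWmem
  have hFcdon : ContDiffOn ℝ (⊤ : ℕ∞) (Function.uncurry f) U' :=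
    fun p hp => (hU p (interior_subset hp)).contDiffWithinAt
  have hVcdon : ContDiffOn ℝ (⊤ : ℕ∞) y V' :=
    fun z hz => (hV z (interior_subset hz)).contDiffWithinAt
  have hy₀ : ContDiffAt ℝ (⊤ : ℕ∞) y x₀ := hy.self_of_nhds
  have htd : Filter.Tendsto (fun x => (x, y x)) (𝓝 x₀) (𝓝 (x₀, y₀)) := by
    rw [← hy0]
    exact continuousAt_id.prodMk hy₀.continuousAt
  have hU'ev : ∀ᶠ x in 𝓝 x₀, (x, y x) ∈ U' := htd (hU'open.mem_nhds hx₀U')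
  have hV'ev : ∀ᶠ x in 𝓝 x₀, x ∈ V' := hV'open.mem_nhds hx₀V'
  have hW'ev : ∀ᶠ x in 𝓝 x₀, x ∈ W' := hW'open.mem_nhds hx₀W'
  filter_upwards [hU'ev, hV'ev, hW'ev] with x hxU hxV hxW
  -- basic derivative facts at x
  have hyx : ContDiffAt ℝ (⊤ : ℕ∞) y x := hV x (interior_subset hxV)
  have hdy : HasDerivAt y (deriv y x) x :=
    (hyx.differentiableAt (by simp)).hasDerivAt
  set y1 := deriv y x with hy1
  have hcf : ContDiffAt ℝ (⊤ : ℕ∞) (Function.uncurry f) (x, y x) :=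
    hU _ (interior_subset hxU)
  -- implicit function relation
  have h1 : HasDerivAt (fun x' => f x' (y x'))
      (pd f 1 0 x (y x) + pd f 0 1 x (y x) * y1) x := hasDerivAt_comp2 hcf hdy
  have h0 : deriv (fun x' => f x' (y x')) x = 0 := by
    have hev : (fun x' => f x' (y x')) =ᶠ[𝓝 x] fun _ => (0 : ℝ) :=
      Filter.eventually_of_mem (hW'open.mem_nhds hxW) fun z hz => hW z (interior_subset hz)
    rw [hev.deriv_eq]
    simp
  have key : pd f 1 0 x (y x) + pd f 0 1 x (y x) * y1 = 0 := by
    rw [← h1.deriv, h0]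
  have hfx : pd f 1 0 x (y x) = -(pd f 0 1 x (y x) * y1) := by linarith
  -- chain rule for pd f 0 1 composed with the curve
  have hcg : ContDiffAt ℝ (⊤ : ℕ∞) (Function.uncurry (pd f 0 1)) (x, y x) :=
    (contDiffOn_pd01 hU'open hFcdon _ hxU).contDiffAt (hU'open.mem_nhds hxU)
  have h2 : HasDerivAt (fun x' => pd f 0 1 x' (y x'))
      (pd (pd f 0 1) 1 0 x (y x) + pd (pd f 0 1) 0 1 x (y x) * y1) x :=
    hasDerivAt_comp2 hcg hdy
  have e11 : pd (pd f 0 1) 1 0 x (y x) = pd f 1 1 x (y x) := by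
    rw [pd10_eq, pd11_eq]
    simp only [pd01_eq]
  have e02 : pd (pd f 0 1) 0 1 x (y x) = pd f 0 2 x (y x) := by
    rw [pd01_eq, pd02_eq]
    congr 1
    funext y'
    rw [pd01_eq]
  rw [e11, e02] at h2
  -- the second claim
  have hA : pd f 0 1 x (y x) * (pd f 1 1 x (y x) + pd f 0 2 x (y x) * y1)
      = pd f 1 1 x (y x) * pd f 0 1 x (y x) - pd f 0 2 x (y x) * pd f 1 0 x (y x) := by
    rw [hfx]; ring
  have claim2 : pd f 0 1 x (y x) * deriv (fun x' => pd f 0 1 x' (y x')) x =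
      pd f 1 1 x (y x) * pd f 0 1 x (y x) - pd f 0 2 x (y x) * pd f 1 0 x (y x) := by
    rw [h2.deriv]; exact hA
  refine ⟨?_, claim2⟩
  -- first claim
  obtain ⟨k, rfl⟩ : ∃ k, n = k + 1 := ⟨n - 1, by omega⟩
  have hYn : HasDerivAt (iteratedDeriv (k + 1) y) (iteratedDeriv (k + 2) y x) x :=
    hasDerivAt_iteratedDeriv hV'open hVcdon (k + 1) hxV
  set d := pd f 1 1 x (y x) + pd f 0 2 x (y x) * y1 with hd
  have hDn : HasDerivAt
      (fun x' => (pd f 0 1 x' (y x')) ^ (2 * (k + 1) - 1) * iteratedDeriv (k + 1) y x')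
      (((2 * (k + 1) - 1 : ℕ) : ℝ) * (pd f 0 1 x (y x)) ^ (2 * (k + 1) - 1 - 1) * d *
          iteratedDeriv (k + 1) y x +
        (pd f 0 1 x (y x)) ^ (2 * (k + 1) - 1) * iteratedDeriv (k + 2) y x) x :=
    (h2.pow (2 * (k + 1) - 1)).mul hYn
  rw [hDn.deriv]
  have e1 : 2 * (k + 1) - 1 = 2 * k + 1 := by omega
  have e3 : 2 * (k + 1) + 1 = 2 * k + 3 := by omega
  rw [e1, e3, show 2 * k + 1 - 1 = 2 * k from by omega]
  have e4 : ((2 * k + 1 : ℕ) : ℝ) = 2 * (k : ℝ) + 1 := by push_cast; ring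
  have e5 : (2 * ((k : ℝ) + 1) - 1) = 2 * (k : ℝ) + 1 := by ring
  push_cast
  rw [show iteratedDeriv (k + 1 + 1) y x = iteratedDeriv (k + 2) y x by norm_num]
  rw [← hA]
  ring
end

section
/- The third derivative of the implicit function satisfies f_y(x₀, y₀)^5 · y'''(x₀) = −f_y · Δ_3 f + 3 · Δ_1(f_y) · Δ_2 f, where all expressions on the right-hand side are evaluated at (x₀, y₀); explicitly, f_y^5 · y'''(x₀) equals (−f_{xxx} f_y^4 + 3 f_{xxy} f_x f_y^3 − 3 f_{xyy} f_x^2 f_y^2 + f_{yyy} f_x^3 f_y) + 3(f_{xy} f_y − f_{yy} f_x)(f_{xx} f_y^2 − 2 f_{xy} f_x f_y + f_{yy} f_x^2). -/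
open Filter Topology Function

lemma pd_one_zero (h : ℝ → ℝ → ℝ) (x y : ℝ) :
    pd h 1 0 x y = deriv (fun t => h t y) x := by
  simp [pd]

lemma pd_zero_one (h : ℝ → ℝ → ℝ) (x y : ℝ) :
    pd h 0 1 x y = deriv (fun t => h x t) y := by
  simp [pd]

lemma pd_succ_left (h : ℝ → ℝ → ℝ) (p r : ℕ) :
    pd h (p+1) r = pd (pd h p r) 1 0 := by
  funext x y
  simp [pd, iteratedDeriv_succ]

lemma pd_succ_right (h : ℝ → ℝ → ℝ) (r : ℕ) :
    pd h 0 (r+1) = pd (pd h 0 r) 0 1 := by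
  funext x y
  simp [pd, iteratedDeriv_succ]

lemma pd_one_r (h : ℝ → ℝ → ℝ) (r : ℕ) :
    pd h 1 r = pd (pd h 0 r) 1 0 := by
  funext x y
  simp [pd]

lemma hasDerivAt_slice_x {h : ℝ → ℝ → ℝ} {x y : ℝ}
    (hd : DifferentiableAt ℝ (uncurry h) (x, y)) :
    HasDerivAt (fun t => h t y) (fderiv ℝ (uncurry h) (x, y) (1, 0)) x := by
  have hc : HasDerivAt (fun t : ℝ => (t, y)) ((1 : ℝ), (0 : ℝ)) x :=
    (hasDerivAt_id x).prodMk (hasDerivAt_const x y)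
  exact hd.hasFDerivAt.comp_hasDerivAt x hc

lemma hasDerivAt_slice_y {h : ℝ → ℝ → ℝ} {x y : ℝ}
    (hd : DifferentiableAt ℝ (uncurry h) (x, y)) :
    HasDerivAt (fun t => h x t) (fderiv ℝ (uncurry h) (x, y) (0, 1)) y := by
  have hc : HasDerivAt (fun t : ℝ => (x, t)) ((0 : ℝ), (1 : ℝ)) y :=
    (hasDerivAt_const y x).prodMk (hasDerivAt_id y)
  exact hd.hasFDerivAt.comp_hasDerivAt y hc

lemma pd10_eq_fderiv {h : ℝ → ℝ → ℝ} {x y : ℝ}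
    (hd : DifferentiableAt ℝ (uncurry h) (x, y)) :
    pd h 1 0 x y = fderiv ℝ (uncurry h) (x, y) (1, 0) := by
  rw [pd_one_zero]; exact (hasDerivAt_slice_x hd).deriv

lemma pd01_eq_fderiv {h : ℝ → ℝ → ℝ} {x y : ℝ}
    (hd : DifferentiableAt ℝ (uncurry h) (x, y)) :
    pd h 0 1 x y = fderiv ℝ (uncurry h) (x, y) (0, 1) := by
  rw [pd_zero_one]; exact (hasDerivAt_slice_y hd).deriv

/-- chain rule along the curve `t ↦ (t, y t)` -/
lemma hasDerivAt_curve {h : ℝ → ℝ → ℝ} {y : ℝ → ℝ} {x y' : ℝ}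
    (hy : HasDerivAt y y' x)
    (hd : DifferentiableAt ℝ (uncurry h) (x, y x)) :
    HasDerivAt (fun t => h t (y t))
      (pd h 1 0 x (y x) + pd h 0 1 x (y x) * y') x := by
  have hc : HasDerivAt (fun t : ℝ => (t, y t)) ((1 : ℝ), y') x :=
    (hasDerivAt_id x).prodMk hy
  have h1 : HasDerivAt (fun t => h t (y t))
      (fderiv ℝ (uncurry h) (x, y x) (1, y')) x := by
    have := hd.hasFDerivAt.comp_hasDerivAt x hc; exact this
  have hv : ((1 : ℝ), y') = (1, 0) + y' • ((0 : ℝ), (1 : ℝ)) := by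
    simp [Prod.ext_iff]
  rw [pd10_eq_fderiv hd, pd01_eq_fderiv hd]
  convert h1 using 1
  rw [hv, map_add, map_smul]
  simp [mul_comm]

lemma le_top1 : ((⊤:ℕ∞) : WithTop ℕ∞) ≠ 0 := by simp
lemma le_top_add1 : ((⊤:ℕ∞) : WithTop ℕ∞) + 1 ≤ ((⊤:ℕ∞) : WithTop ℕ∞) := by exact_mod_cast le_rfl
lemma le_top2 : minSmoothness ℝ 2 ≤ ((⊤:ℕ∞) : WithTop ℕ∞) := by
  rw [minSmoothness_of_isRCLikeNormedField, show ((2 : WithTop ℕ∞)) = (((2:ℕ∞)) : WithTop ℕ∞) by norm_cast]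
  exact_mod_cast (le_top : (2:ℕ∞) ≤ ⊤)

lemma contDiffAt_pd10 {h : ℝ → ℝ → ℝ} {q : ℝ × ℝ}
    (hh : ∀ᶠ p in 𝓝 q, ContDiffAt ℝ (⊤:ℕ∞) (uncurry h) p) :
    ContDiffAt ℝ (⊤:ℕ∞) (uncurry (pd h 1 0)) q := by
  have hf' : ContDiffAt ℝ (⊤:ℕ∞) (fderiv ℝ (uncurry h)) q :=
    hh.self_of_nhds.fderiv_right le_top_add1
  have happ : ContDiffAt ℝ (⊤:ℕ∞)
      (fun p => fderiv ℝ (uncurry h) p ((1:ℝ), (0:ℝ))) q :=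
    hf'.clm_apply contDiffAt_const
  apply happ.congr_of_eventuallyEq
  filter_upwards [hh] with p hp
  rcases p with ⟨a, b⟩
  exact pd10_eq_fderiv (hp.differentiableAt le_top1)

lemma contDiffAt_pd01 {h : ℝ → ℝ → ℝ} {q : ℝ × ℝ}
    (hh : ∀ᶠ p in 𝓝 q, ContDiffAt ℝ (⊤:ℕ∞) (uncurry h) p) :
    ContDiffAt ℝ (⊤:ℕ∞) (uncurry (pd h 0 1)) q := by
  have hf' : ContDiffAt ℝ (⊤:ℕ∞) (fderiv ℝ (uncurry h)) q :=
    hh.self_of_nhds.fderiv_right le_top_add1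
  have happ : ContDiffAt ℝ (⊤:ℕ∞)
      (fun p => fderiv ℝ (uncurry h) p ((0:ℝ), (1:ℝ))) q :=
    hf'.clm_apply contDiffAt_const
  apply happ.congr_of_eventuallyEq
  filter_upwards [hh] with p hp
  rcases p with ⟨a, b⟩
  exact pd01_eq_fderiv (hp.differentiableAt le_top1)

lemma contDiffAt_deriv {y : ℝ → ℝ} {x : ℝ}
    (hy : ContDiffAt ℝ (⊤:ℕ∞) y x) :
    ContDiffAt ℝ (⊤:ℕ∞) (deriv y) x := by
  have hf' : ContDiffAt ℝ (⊤:ℕ∞) (fderiv ℝ y) x := hy.fderiv_right le_top_add1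
  have happ : ContDiffAt ℝ (⊤:ℕ∞) (fun t => fderiv ℝ y t (1:ℝ)) x :=
    hf'.clm_apply contDiffAt_const
  have : deriv y = fun t => fderiv ℝ y t (1:ℝ) := by
    funext t; exact (fderiv_apply_one_eq_deriv).symm
  rw [this]; exact happ

lemma pd_symm {h : ℝ → ℝ → ℝ} {x y : ℝ}
    (hh : ∀ᶠ p in 𝓝 (x, y), ContDiffAt ℝ (⊤:ℕ∞) (uncurry h) p) :
    pd (pd h 1 0) 0 1 x y = pd (pd h 0 1) 1 0 x y := by
  have hsym : IsSymmSndFDerivAt ℝ (uncurry h) (x, y) :=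
    hh.self_of_nhds.isSymmSndFDerivAt le_top2
  have hd2 : DifferentiableAt ℝ (fderiv ℝ (uncurry h)) (x, y) :=
    (hh.self_of_nhds.fderiv_right le_top_add1).differentiableAt le_top1
  have tendy : Filter.Tendsto (fun s : ℝ => (x, s)) (𝓝 y) (𝓝 (x, y)) :=
    (continuous_const.prodMk continuous_id).tendsto y
  have tendx : Filter.Tendsto (fun t : ℝ => (t, y)) (𝓝 x) (𝓝 (x, y)) :=
    (continuous_id.prodMk continuous_const).tendsto x
  -- LHS
  have hcy : HasDerivAt (fun s : ℝ => (x, s)) ((0:ℝ), (1:ℝ)) y :=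
    (hasDerivAt_const y x).prodMk (hasDerivAt_id y)
  have hphi : HasDerivAt (fun s => fderiv ℝ (uncurry h) (x, s))
      (fderiv ℝ (fderiv ℝ (uncurry h)) (x, y) (0, 1)) y :=
    hd2.hasFDerivAt.comp_hasDerivAt y hcy
  have hphi1 : HasDerivAt (fun s => fderiv ℝ (uncurry h) (x, s) ((1:ℝ), (0:ℝ)))
      (fderiv ℝ (fderiv ℝ (uncurry h)) (x, y) (0, 1) ((1:ℝ), (0:ℝ))) y := by
    have := hphi.clm_apply (hasDerivAt_const y ((1:ℝ), (0:ℝ)))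
    simpa using this
  have hev : (fun s => pd h 1 0 x s) =ᶠ[𝓝 y]
      (fun s => fderiv ℝ (uncurry h) (x, s) ((1:ℝ), (0:ℝ))) := by
    filter_upwards [tendy.eventually hh] with s hs
    exact pd10_eq_fderiv (hs.differentiableAt le_top1)
  have hL : pd (pd h 1 0) 0 1 x y
      = fderiv ℝ (fderiv ℝ (uncurry h)) (x, y) (0, 1) ((1:ℝ), (0:ℝ)) := by
    rw [pd_zero_one]
    exact (hphi1.congr_of_eventuallyEq hev).deriv
  -- RHS
  have hcx : HasDerivAt (fun t : ℝ => (t, y)) ((1:ℝ), (0:ℝ)) x :=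
    (hasDerivAt_id x).prodMk (hasDerivAt_const x y)
  have hpsi : HasDerivAt (fun t => fderiv ℝ (uncurry h) (t, y))
      (fderiv ℝ (fderiv ℝ (uncurry h)) (x, y) (1, 0)) x :=
    hd2.hasFDerivAt.comp_hasDerivAt x hcx
  have hpsi1 : HasDerivAt (fun t => fderiv ℝ (uncurry h) (t, y) ((0:ℝ), (1:ℝ)))
      (fderiv ℝ (fderiv ℝ (uncurry h)) (x, y) (1, 0) ((0:ℝ), (1:ℝ))) x := by
    have := hpsi.clm_apply (hasDerivAt_const x ((0:ℝ), (1:ℝ)))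
    simpa using this
  have hev' : (fun t => pd h 0 1 t y) =ᶠ[𝓝 x]
      (fun t => fderiv ℝ (uncurry h) (t, y) ((0:ℝ), (1:ℝ))) := by
    filter_upwards [tendx.eventually hh] with t ht
    exact pd01_eq_fderiv (ht.differentiableAt le_top1)
  have hR : pd (pd h 0 1) 1 0 x y
      = fderiv ℝ (fderiv ℝ (uncurry h)) (x, y) (1, 0) ((0:ℝ), (1:ℝ)) := by
    rw [pd_one_zero]
    exact (hpsi1.congr_of_eventuallyEq hev').deriv
  rw [hL, hR]
  exact hsym _ _

lemma pd10_congr {h₁ h₂ : ℝ → ℝ → ℝ} {x y : ℝ}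
    (he : ∀ᶠ p in 𝓝 (x, y), h₁ p.1 p.2 = h₂ p.1 p.2) :
    pd h₁ 1 0 x y = pd h₂ 1 0 x y := by
  rw [pd_one_zero, pd_one_zero]
  apply Filter.EventuallyEq.deriv_eq
  have tendx : Filter.Tendsto (fun t : ℝ => (t, y)) (𝓝 x) (𝓝 (x, y)) :=
    (continuous_id.prodMk continuous_const).tendsto x
  filter_upwards [tendx.eventually he] with t ht
  exact ht


theorem statement3 (f : ℝ → ℝ → ℝ) (x₀ y₀ : ℝ) (y : ℝ → ℝ)
    (hf : ∀ᶠ p in 𝓝 (x₀, y₀), ContDiffAt ℝ (⊤ : ℕ∞) (Function.uncurry f) p)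
    (hf0 : f x₀ y₀ = 0) (hfy : pd f 0 1 x₀ y₀ ≠ 0)
    (hy : ∀ᶠ x in 𝓝 x₀, ContDiffAt ℝ (⊤ : ℕ∞) y x)
    (hy0 : y x₀ = y₀)
    (himp : ∀ᶠ x in 𝓝 x₀, f x (y x) = 0) :
    (pd f 0 1 x₀ y₀) ^ 5 * iteratedDeriv 3 y x₀ =
      -(pd f 0 1 x₀ y₀) * Delta f 3 f x₀ y₀ +
        3 * Delta f 1 (pd f 0 1) x₀ y₀ * Delta f 2 f x₀ y₀ ∧
    (pd f 0 1 x₀ y₀) ^ 5 * iteratedDeriv 3 y x₀ =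
      (-(pd f 3 0 x₀ y₀) * (pd f 0 1 x₀ y₀) ^ 4 +
        3 * pd f 2 1 x₀ y₀ * pd f 1 0 x₀ y₀ * (pd f 0 1 x₀ y₀) ^ 3 -
        3 * pd f 1 2 x₀ y₀ * (pd f 1 0 x₀ y₀) ^ 2 * (pd f 0 1 x₀ y₀) ^ 2 +
        pd f 0 3 x₀ y₀ * (pd f 1 0 x₀ y₀) ^ 3 * pd f 0 1 x₀ y₀) +
      3 * (pd f 1 1 x₀ y₀ * pd f 0 1 x₀ y₀ - pd f 0 2 x₀ y₀ * pd f 1 0 x₀ y₀) *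
        (pd f 2 0 x₀ y₀ * (pd f 0 1 x₀ y₀) ^ 2 -
          2 * pd f 1 1 x₀ y₀ * pd f 1 0 x₀ y₀ * pd f 0 1 x₀ y₀ +
          pd f 0 2 x₀ y₀ * (pd f 1 0 x₀ y₀) ^ 2) := by
  subst hy0
  -- continuity of the curve x ↦ (x, y x) at x₀
  have hyc0 : ContDiffAt ℝ (⊤:ℕ∞) y x₀ := hy.self_of_nhds
  have ctend : Filter.Tendsto (fun x => (x, y x)) (𝓝 x₀) (𝓝 (x₀, y x₀)) :=
    (continuousAt_id.prodMk (hyc0.continuousAt)).tendsto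
  have hcf : ∀ᶠ x in 𝓝 x₀, ∀ᶠ p in 𝓝 (x, y x),
      ContDiffAt ℝ (⊤:ℕ∞) (uncurry f) p := ctend.eventually hf.eventually_nhds
  have hyy : ∀ᶠ x in 𝓝 x₀, ContDiffAt ℝ (⊤:ℕ∞) y x := hy
  -- first differentiation
  have hE0 : ∀ᶠ x in 𝓝 x₀,
      pd f 1 0 x (y x) + pd f 0 1 x (y x) * deriv y x = 0 := by
    filter_upwards [hcf, hyy, himp.eventually_nhds] with x hfx hyx h0x
    have hyd : HasDerivAt y (deriv y x) x :=
      (hyx.differentiableAt le_top1).hasDerivAt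
    have h1 := hasDerivAt_curve hyd
      ((hfx.self_of_nhds).differentiableAt le_top1)
    have h2 : HasDerivAt (fun t => f t (y t)) 0 x := by
      apply HasDerivAt.congr_of_eventuallyEq (hasDerivAt_const x 0)
      filter_upwards [h0x] with t ht
      exact ht
    exact h1.unique h2
  -- second differentiation
  have hE1 : ∀ᶠ x in 𝓝 x₀,
      pd f 2 0 x (y x) + 2 * pd f 1 1 x (y x) * deriv y x +
        pd f 0 2 x (y x) * (deriv y x) ^ 2 +
        pd f 0 1 x (y x) * deriv (deriv y) x = 0 := by
    filter_upwards [hcf, hyy, hE0.eventually_nhds] with x hfx hyx h0x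
    have hyd : HasDerivAt y (deriv y x) x :=
      (hyx.differentiableAt le_top1).hasDerivAt
    have hyd2 : HasDerivAt (deriv y) (deriv (deriv y) x) x :=
      ((contDiffAt_deriv hyx).differentiableAt le_top1).hasDerivAt
    have hfxs : ContDiffAt ℝ (⊤:ℕ∞) (uncurry (pd f 1 0)) (x, y x) :=
      contDiffAt_pd10 hfx
    have hfys : ContDiffAt ℝ (⊤:ℕ∞) (uncurry (pd f 0 1)) (x, y x) :=
      contDiffAt_pd01 hfx
    have hdx := hasDerivAt_curve hyd (hfxs.differentiableAt le_top1)
    have hdy := hasDerivAt_curve hyd (hfys.differentiableAt le_top1)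
    have hsum := hdx.add (hdy.mul hyd2)
    have hzero : HasDerivAt
        (fun t => pd f 1 0 t (y t) + pd f 0 1 t (y t) * deriv y t) 0 x := by
      apply HasDerivAt.congr_of_eventuallyEq (hasDerivAt_const x 0)
      filter_upwards [h0x] with t ht
      exact ht
    have hval := hsum.unique hzero
    have e20 : pd (pd f 1 0) 1 0 = pd f 2 0 := (pd_succ_left f 1 0).symm
    have e11 : pd (pd f 1 0) 0 1 x (y x) = pd f 1 1 x (y x) := by
      rw [pd_symm hfx, ← pd_one_r]
    have e11' : pd (pd f 0 1) 1 0 = pd f 1 1 := (pd_one_r f 1).symm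
    have e02 : pd (pd f 0 1) 0 1 = pd f 0 2 := (pd_succ_right f 1).symm
    rw [e20, e11, e11', e02] at hval
    linear_combination hval
  -- third differentiation, at x₀ only
  have hyd : HasDerivAt y (deriv y x₀) x₀ :=
    (hyc0.differentiableAt le_top1).hasDerivAt
  have hyd2 : HasDerivAt (deriv y) (deriv (deriv y) x₀) x₀ :=
    ((contDiffAt_deriv hyc0).differentiableAt le_top1).hasDerivAt
  have hyd3 : HasDerivAt (deriv (deriv y)) (deriv (deriv (deriv y)) x₀) x₀ :=
    ((contDiffAt_deriv (contDiffAt_deriv hyc0)).differentiableAt le_top1).hasDerivAt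
  have hfx_nb : ∀ᶠ p in 𝓝 (x₀, y x₀), ContDiffAt ℝ (⊤:ℕ∞) (uncurry (pd f 1 0)) p := by
    filter_upwards [hf.eventually_nhds] with p hp
    exact contDiffAt_pd10 hp
  have hfy_nb : ∀ᶠ p in 𝓝 (x₀, y x₀), ContDiffAt ℝ (⊤:ℕ∞) (uncurry (pd f 0 1)) p := by
    filter_upwards [hf.eventually_nhds] with p hp
    exact contDiffAt_pd01 hp
  have s20 : ContDiffAt ℝ (⊤:ℕ∞) (uncurry (pd f 2 0)) (x₀, y x₀) := by
    rw [show pd f 2 0 = pd (pd f 1 0) 1 0 from pd_succ_left f 1 0]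
    exact contDiffAt_pd10 hfx_nb
  have s11 : ContDiffAt ℝ (⊤:ℕ∞) (uncurry (pd f 1 1)) (x₀, y x₀) := by
    rw [show pd f 1 1 = pd (pd f 0 1) 1 0 from pd_one_r f 1]
    exact contDiffAt_pd10 hfy_nb
  have s02 : ContDiffAt ℝ (⊤:ℕ∞) (uncurry (pd f 0 2)) (x₀, y x₀) := by
    rw [show pd f 0 2 = pd (pd f 0 1) 0 1 from pd_succ_right f 1]
    exact contDiffAt_pd01 hfy_nb
  have sfy : ContDiffAt ℝ (⊤:ℕ∞) (uncurry (pd f 0 1)) (x₀, y x₀) :=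
    contDiffAt_pd01 hf
  have hd20 := hasDerivAt_curve hyd (s20.differentiableAt le_top1)
  have hd11 := hasDerivAt_curve hyd (s11.differentiableAt le_top1)
  have hd02 := hasDerivAt_curve hyd (s02.differentiableAt le_top1)
  have hdfy := hasDerivAt_curve hyd (sfy.differentiableAt le_top1)
  have t2 := (hd11.const_mul (2:ℝ)).mul hyd2
  have t3 := hd02.mul (hyd2.pow 2)
  have t4 := hdfy.mul hyd3
  have hsum := ((hd20.add t2).add t3).add t4
  have hzero : HasDerivAt
      (fun x => pd f 2 0 x (y x) + 2 * pd f 1 1 x (y x) * deriv y x +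
        pd f 0 2 x (y x) * (deriv y x) ^ 2 +
        pd f 0 1 x (y x) * deriv (deriv y) x) 0 x₀ := by
    apply HasDerivAt.congr_of_eventuallyEq (hasDerivAt_const x₀ 0)
    filter_upwards [hE1] with t ht
    exact ht
  have hval := hsum.unique hzero
  -- identify the partial derivatives
  have e30 : pd (pd f 2 0) 1 0 = pd f 3 0 := (pd_succ_left f 2 0).symm
  have e21 : pd (pd f 2 0) 0 1 x₀ (y x₀) = pd f 2 1 x₀ (y x₀) := by
    rw [show pd f 2 0 = pd (pd f 1 0) 1 0 from pd_succ_left f 1 0]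
    rw [pd_symm hfx_nb]
    have he : ∀ᶠ p in 𝓝 (x₀, y x₀),
        pd (pd f 1 0) 0 1 p.1 p.2 = pd f 1 1 p.1 p.2 := by
      filter_upwards [hf.eventually_nhds] with p hp
      rcases p with ⟨u, v⟩
      rw [pd_symm hp, ← pd_one_r]
    rw [pd10_congr he, show pd (pd f 1 1) 1 0 = pd f 2 1 from (pd_succ_left f 1 1).symm]
  have e21' : pd (pd f 1 1) 1 0 = pd f 2 1 := (pd_succ_left f 1 1).symm
  have e12 : pd (pd f 1 1) 0 1 x₀ (y x₀) = pd f 1 2 x₀ (y x₀) := by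
    rw [show pd f 1 1 = pd (pd f 0 1) 1 0 from pd_one_r f 1]
    rw [pd_symm hfy_nb]
    rw [show pd (pd f 0 1) 0 1 = pd f 0 2 from (pd_succ_right f 1).symm]
    rw [show pd (pd f 0 2) 1 0 = pd f 1 2 from (pd_one_r f 2).symm]
  have e12' : pd (pd f 0 2) 1 0 = pd f 1 2 := (pd_one_r f 2).symm
  have e03 : pd (pd f 0 2) 0 1 = pd f 0 3 := (pd_succ_right f 2).symm
  have e11' : pd (pd f 0 1) 1 0 = pd f 1 1 := (pd_one_r f 1).symm
  have e02 : pd (pd f 0 1) 0 1 = pd f 0 2 := (pd_succ_right f 1).symm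
  rw [e30, e21, e21', e12, e12', e03, e11', e02] at hval
  -- the three scalar equations
  have hA := hE0.self_of_nhds
  have hB := hE1.self_of_nhds
  have hiter3 : iteratedDeriv 3 y x₀ = deriv (deriv (deriv y)) x₀ := by
    rw [show (3:ℕ) = 2 + 1 from rfl, iteratedDeriv_succ,
      show (2:ℕ) = 1 + 1 from rfl, iteratedDeriv_succ, iteratedDeriv_one]
  set fx := pd f 1 0 x₀ (y x₀) with hfx_def
  set fy := pd f 0 1 x₀ (y x₀) with hfy_def
  set fxx := pd f 2 0 x₀ (y x₀)
  set fxy := pd f 1 1 x₀ (y x₀)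
  set fyy := pd f 0 2 x₀ (y x₀)
  set fxxx := pd f 3 0 x₀ (y x₀)
  set fxxy := pd f 2 1 x₀ (y x₀)
  set fxyy := pd f 1 2 x₀ (y x₀)
  set fyyy := pd f 0 3 x₀ (y x₀)
  set Y1 := deriv y x₀
  set Y2 := deriv (deriv y) x₀
  set Y3 := deriv (deriv (deriv y)) x₀
  have hT : fy ^ 3 * Y2 + (fxx * fy ^ 2 - 2 * fxy * fx * fy + fyy * fx ^ 2) = 0 := by
    linear_combination fy ^ 2 * hB + (-2 * fxy * fy + fyy * (fx - fy * Y1)) * hA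
  have key : fy ^ 5 * iteratedDeriv 3 y x₀ =
      (-fxxx * fy ^ 4 + 3 * fxxy * fx * fy ^ 3 - 3 * fxyy * fx ^ 2 * fy ^ 2 +
        fyyy * fx ^ 3 * fy) +
      3 * (fxy * fy - fyy * fx) *
        (fxx * fy ^ 2 - 2 * fxy * fx * fy + fyy * fx ^ 2) := by
    rw [hiter3]
    rw [Pi.pow_apply] at hval
    linear_combination fy ^ 4 * hval -
      (3 * fxxy * fy ^ 3 + 3 * fxyy * fy ^ 2 * ((fx + fy * Y1) - 2 * fx) +
        fyyy * fy * ((fx + fy * Y1) ^ 2 - 3 * (fx + fy * Y1) * fx + 3 * fx ^ 2) +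
        3 * fyy * fy ^ 3 * Y2) * hA -
      (3 * fxy * fy - 3 * fyy * fx) * hT
  constructor
  · have hD3 : Delta f 3 f x₀ (y x₀) =
        fxxx * fy ^ 3 - 3 * fxxy * fx * fy ^ 2 + 3 * fxyy * fx ^ 2 * fy -
          fyyy * fx ^ 3 := by
      simp only [Delta, Finset.sum_range_succ, Finset.sum_range_zero]
      norm_num
      ring
    have hD2 : Delta f 2 f x₀ (y x₀) =
        fxx * fy ^ 2 - 2 * fxy * fx * fy + fyy * fx ^ 2 := by
      simp only [Delta, Finset.sum_range_succ, Finset.sum_range_zero]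
      norm_num
      ring
    have hD1 : Delta f 1 (pd f 0 1) x₀ (y x₀) = fxy * fy - fyy * fx := by
      simp only [Delta, Finset.sum_range_succ, Finset.sum_range_zero]
      rw [show pd (pd f 0 1) 1 0 = pd f 1 1 from (pd_one_r f 1).symm,
        show pd (pd f 0 1) 0 1 = pd f 0 2 from (pd_succ_right f 1).symm]
      norm_num
      ring
    rw [hD3, hD2, hD1]
    linear_combination key
  · linear_combination key
end

section
/- The fourth derivative of the implicit function satisfies f_y(x₀, y₀)^7 · y''''(x₀) = −f_y^2 · Δ_4 f + 4 f_y · Δ_1(f_y) · Δ_3 f + 6 f_y · Δ_2(f_y) · Δ_2 f − 3 f_{yy} · (Δ_2 f)^2 − 12 (Δ_1(f_y))^2 · Δ_2 f, where all expressions on the right-hand side are evaluated at (x₀, y₀). -/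
open Filter Topology

noncomputable section
namespace St4

def D (v : ℝ × ℝ) (g : ℝ × ℝ → ℝ) : ℝ × ℝ → ℝ := fun q => fderiv ℝ g q v

def Sm (q₀ : ℝ × ℝ) (g : ℝ × ℝ → ℝ) : Prop := ∀ᶠ q in 𝓝 q₀, ContDiffAt ℝ (⊤ : ℕ∞) g q

variable {q₀ : ℝ × ℝ} {g F G : ℝ × ℝ → ℝ}

lemma Sm.dirD (h : Sm q₀ g) (v : ℝ × ℝ) : Sm q₀ (D v g) := by
  filter_upwards [h] with q hq
  exact (hq.fderiv_right (m := (⊤:ℕ∞)) (by simp)).clm_apply contDiffAt_const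

lemma Sm.iter (h : Sm q₀ g) (v : ℝ × ℝ) (n : ℕ) : Sm q₀ ((D v)^[n] g) := by
  induction n generalizing g with
  | zero => exact h
  | succ n ih => rw [Function.iterate_succ_apply]; exact ih (h.dirD v)

lemma hasDerivAt_snd {x y : ℝ} (h : DifferentiableAt ℝ g (x, y)) :
    HasDerivAt (fun y' => g (x, y')) (D (0,1) g (x, y)) y := by
  have hc : HasDerivAt (fun y' : ℝ => ((x : ℝ), y')) ((0:ℝ), (1:ℝ)) y :=
    HasDerivAt.prodMk (hasDerivAt_const y x) (hasDerivAt_id y)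
  exact h.hasFDerivAt.comp_hasDerivAt y hc

lemma hasDerivAt_fst {x y : ℝ} (h : DifferentiableAt ℝ g (x, y)) :
    HasDerivAt (fun x' => g (x', y)) (D (1,0) g (x, y)) x := by
  have hc : HasDerivAt (fun x' : ℝ => (x', (y : ℝ))) ((1:ℝ), (0:ℝ)) x :=
    HasDerivAt.prodMk (hasDerivAt_id x) (hasDerivAt_const x y)
  exact h.hasFDerivAt.comp_hasDerivAt x hc

lemma eq_vert (h : Sm q₀ g) (r : ℕ) :
    ∀ᶠ q in 𝓝 q₀, iteratedDeriv r (fun y' => g (q.1, y')) q.2 = (D (0,1))^[r] g q := by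
  induction r with
  | zero => filter_upwards with q; simp
  | succ r ih =>
    filter_upwards [ih.eventually_nhds, (h.iter (0,1) r)] with q hq hsm
    have hT : ContinuousAt (fun y' : ℝ => (q.1, y')) q.2 :=
      (continuousAt_const.prodMk continuousAt_id)
    have heq : (fun y' => iteratedDeriv r (fun y'' => g (q.1, y'')) y')
        =ᶠ[𝓝 q.2] (fun y' => (D (0,1))^[r] g (q.1, y')) := by
      have : Filter.Tendsto (fun y' : ℝ => (q.1, y')) (𝓝 q.2) (𝓝 q) := by
        simpa using hT.tendsto
      filter_upwards [this.eventually hq] with y' hy'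
      exact hy'
    rw [iteratedDeriv_succ, heq.deriv_eq]
    have hd : DifferentiableAt ℝ ((D (0,1))^[r] g) (q.1, q.2) := by
      simpa using hsm.differentiableAt (by simp)
    have := (hasDerivAt_snd hd).deriv
    simp only [Prod.mk.eta] at this
    rw [this, ← Function.iterate_succ_apply' (D (0,1))]

lemma eq_horiz (h : Sm q₀ g) (hFg : ∀ᶠ q in 𝓝 q₀, F q = g q) (p : ℕ) :
    ∀ᶠ q in 𝓝 q₀, iteratedDeriv p (fun x' => F (x', q.2)) q.1 = (D (1,0))^[p] g q := by
  induction p with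
  | zero => filter_upwards [hFg] with q hq; simpa using hq
  | succ p ih =>
    filter_upwards [ih.eventually_nhds, (h.iter (1,0) p)] with q hq hsm
    have hT : ContinuousAt (fun x' : ℝ => (x', q.2)) q.1 :=
      (continuousAt_id.prodMk continuousAt_const)
    have heq : (fun x' => iteratedDeriv p (fun x'' => F (x'', q.2)) x')
        =ᶠ[𝓝 q.1] (fun x' => (D (1,0))^[p] g (x', q.2)) := by
      have : Filter.Tendsto (fun x' : ℝ => (x', q.2)) (𝓝 q.1) (𝓝 q) := by
        simpa using hT.tendsto
      filter_upwards [this.eventually hq] with x' hx'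
      exact hx'
    rw [iteratedDeriv_succ, heq.deriv_eq]
    have hd : DifferentiableAt ℝ ((D (1,0))^[p] g) (q.1, q.2) := by
      simpa using hsm.differentiableAt (by simp)
    have := (hasDerivAt_fst hd).deriv
    simp only [Prod.mk.eta] at this
    rw [this, ← Function.iterate_succ_apply' (D (1,0))]


lemma dirD_congr (v : ℝ × ℝ) (h : F =ᶠ[𝓝 q₀] G) : D v F =ᶠ[𝓝 q₀] D v G := by
  filter_upwards [h.eventually_nhds] with q hq
  exact congrFun (congrArg _ (Filter.EventuallyEq.fderiv_eq hq)) v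

lemma iter_congr (v : ℝ × ℝ) (n : ℕ) (h : F =ᶠ[𝓝 q₀] G) :
    (D v)^[n] F =ᶠ[𝓝 q₀] (D v)^[n] G := by
  induction n generalizing F G with
  | zero => exact h
  | succ n ih =>
    rw [Function.iterate_succ_apply, Function.iterate_succ_apply]
    exact ih (dirD_congr v h)

lemma swap_base (h : Sm q₀ g) :
    D (0,1) (D (1,0) g) =ᶠ[𝓝 q₀] D (1,0) (D (0,1) g) := by
  filter_upwards [h] with q hq
  have hsym : IsSymmSndFDerivAt ℝ g q := hq.isSymmSndFDerivAt (by simp [minSmoothness_of_isRCLikeNormedField]; decide)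
  have hdiff : DifferentiableAt ℝ (fderiv ℝ g) q :=
    (hq.fderiv_right (m := 1) (by decide)).differentiableAt one_ne_zero
  have h1 : ∀ v w : ℝ × ℝ, D w (D v g) q = fderiv ℝ (fderiv ℝ g) q w v := by
    intro v w
    show fderiv ℝ (fun q' => (fderiv ℝ g q') v) q w = _
    rw [fderiv_clm_apply hdiff (differentiableAt_const _)]
    simp
  rw [h1, h1, hsym]

lemma swap_iter (h : Sm q₀ g) (p : ℕ) :
    D (0,1) ((D (1,0))^[p] g) =ᶠ[𝓝 q₀] (D (1,0))^[p] (D (0,1) g) := by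
  induction p generalizing g with
  | zero => exact EventuallyEq.rfl
  | succ p ih =>
    rw [Function.iterate_succ_apply, Function.iterate_succ_apply]
    calc D (0,1) ((D (1,0))^[p] (D (1,0) g))
        =ᶠ[𝓝 q₀] (D (1,0))^[p] (D (0,1) (D (1,0) g)) := ih (h.dirD _)
      _ =ᶠ[𝓝 q₀] (D (1,0))^[p] (D (1,0) (D (0,1) g)) := iter_congr _ p (swap_base h)



lemma pd_eq {f : ℝ → ℝ → ℝ} (h : Sm q₀ (Function.uncurry f)) (p r : ℕ) :
    ∀ᶠ q in 𝓝 q₀, pd f p r q.1 q.2 = (D (1,0))^[p] ((D (0,1))^[r] (Function.uncurry f)) q := by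
  exact eq_horiz (h.iter (0,1) r) (eq_vert h r) p

lemma master {f : ℝ → ℝ → ℝ} {x₀ y₀ : ℝ} {y : ℝ → ℝ}
    (hf : Sm (x₀, y₀) (Function.uncurry f))
    (hy : ∀ᶠ x in 𝓝 x₀, ContDiffAt ℝ (⊤ : ℕ∞) y x)
    (hy0 : y x₀ = y₀) (p r : ℕ) :
    ∀ᶠ x in 𝓝 x₀, HasDerivAt (fun t => pd f p r t (y t))
      (pd f (p+1) r x (y x) + pd f p (r+1) x (y x) * deriv y x) x := by
  set u := Function.uncurry f with hu
  set W : (ℝ × ℝ) → ℝ := (D (1,0))^[p] ((D (0,1))^[r] u) with hW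
  have hWsm : Sm (x₀, y₀) W := (hf.iter (0,1) r).iter (1,0) p
  have hpd : ∀ᶠ q in 𝓝 (x₀,y₀), pd f p r q.1 q.2 = W q := pd_eq hf p r
  have hpd1 : ∀ᶠ q in 𝓝 (x₀,y₀), pd f (p+1) r q.1 q.2 = D (1,0) W q := by
    have := pd_eq hf (p+1) r
    rwa [Function.iterate_succ_apply' (D (1,0))] at this
  have hpd2 : ∀ᶠ q in 𝓝 (x₀,y₀), pd f p (r+1) q.1 q.2 = D (0,1) W q := by
    have h1 := pd_eq hf p (r+1)
    have h2 : (D (1,0))^[p] ((D (0,1))^[r+1] u) =ᶠ[𝓝 (x₀,y₀)] D (0,1) W := by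
      rw [Function.iterate_succ_apply' (D (0,1))]
      exact (swap_iter (hf.iter (0,1) r) p).symm
    filter_upwards [h1, h2] with q hq1 hq2
    rw [hq1, hq2]
  have hycont : ContinuousAt y x₀ := hy.self_of_nhds.continuousAt
  have T : Filter.Tendsto (fun t => (t, y t)) (𝓝 x₀) (𝓝 (x₀, y₀)) := by
    have h2 : ContinuousAt (fun t => (t, y t)) x₀ := continuousAt_id.prodMk hycont
    unfold ContinuousAt at h2
    simp only [hy0] at h2
    exact h2
  filter_upwards [T.eventually hpd.eventually_nhds, T.eventually hpd1,
    T.eventually hpd2, T.eventually hWsm, hy] with x hpdx hpd1x hpd2x hWx hyx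
  have hy' : HasDerivAt y (deriv y x) x := (hyx.differentiableAt (by decide)).hasDerivAt
  have hc : HasDerivAt (fun t => (t, y t)) ((1 : ℝ), deriv y x) x := HasDerivAt.prodMk (hasDerivAt_id x) hy'
  have hWd : DifferentiableAt ℝ W (x, y x) := hWx.differentiableAt (by decide)
  have hcomp : HasDerivAt (fun t => W (t, y t)) (fderiv ℝ W (x, y x) (1, deriv y x)) x :=
    hWd.hasFDerivAt.comp_hasDerivAt x hc
  have heq : (fun t => pd f p r t (y t)) =ᶠ[𝓝 x] (fun t => W (t, y t)) := by
    have Tx : Filter.Tendsto (fun t => (t, y t)) (𝓝 x) (𝓝 (x, y x)) :=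
      continuousAt_id.prodMk hyx.continuousAt
    filter_upwards [Tx.eventually hpdx] with t ht
    exact ht
  have final := hcomp.congr_of_eventuallyEq heq
  have hval : fderiv ℝ W (x, y x) (1, deriv y x)
      = pd f (p+1) r x (y x) + pd f p (r+1) x (y x) * deriv y x := by
    rw [hpd1x, hpd2x]
    have hv : ((1 : ℝ), deriv y x) = ((1:ℝ),(0:ℝ)) + (deriv y x) • ((0:ℝ),(1:ℝ)) := by
      simp [Prod.ext_iff]
    rw [hv, map_add, map_smul]
    simp [D, mul_comm]
  rwa [hval] at final


lemma ydiff {x₀ : ℝ} {y : ℝ → ℝ}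
    (hy : ∀ᶠ x in 𝓝 x₀, ContDiffAt ℝ (⊤ : ℕ∞) y x) (k : ℕ) :
    ∀ᶠ x in 𝓝 x₀, HasDerivAt (iteratedDeriv k y) (iteratedDeriv (k+1) y x) x := by
  filter_upwards [hy] with x hx
  have h1 : ContDiffAt ℝ 1 (iteratedFDeriv ℝ k y) x :=
    hx.iteratedFDeriv_right (m := 1) (by exact_mod_cast le_top)
  have h2 : ContDiffAt ℝ 1 (iteratedDeriv k y) x := by
    have : iteratedDeriv k y = fun t =>
        (ContinuousMultilinearMap.apply ℝ (fun _ : Fin k => ℝ) ℝ (fun _ => (1:ℝ)))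
          (iteratedFDeriv ℝ k y t) := by
      funext t; rw [iteratedDeriv_eq_iteratedFDeriv]; rfl
    rw [this]
    exact ((ContinuousMultilinearMap.apply ℝ (fun _ : Fin k => ℝ) ℝ
      (fun _ => (1:ℝ))).contDiff.contDiffAt).comp x h1
  have hd : DifferentiableAt ℝ (iteratedDeriv k y) x := h2.differentiableAt one_ne_zero
  rw [iteratedDeriv_succ]
  exact hd.hasDerivAt


lemma pd01 (f : ℝ → ℝ → ℝ) (p r : ℕ) : pd (pd f 0 1) p r = pd f p (r+1) := by
  funext x y
  simp only [pd, iteratedDeriv_zero, iteratedDeriv_one, ← iteratedDeriv_succ']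

end St4

theorem statement4 (f : ℝ → ℝ → ℝ) (x₀ y₀ : ℝ) (y : ℝ → ℝ)
    (hf : ∀ᶠ p in 𝓝 (x₀, y₀), ContDiffAt ℝ (⊤ : ℕ∞) (Function.uncurry f) p)
    (hf0 : f x₀ y₀ = 0) (hfy : pd f 0 1 x₀ y₀ ≠ 0)
    (hy : ∀ᶠ x in 𝓝 x₀, ContDiffAt ℝ (⊤ : ℕ∞) y x)
    (hy0 : y x₀ = y₀)
    (himp : ∀ᶠ x in 𝓝 x₀, f x (y x) = 0) :
    (pd f 0 1 x₀ y₀) ^ 7 * iteratedDeriv 4 y x₀ =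
      -(pd f 0 1 x₀ y₀) ^ 2 * Delta f 4 f x₀ y₀ +
        4 * pd f 0 1 x₀ y₀ * Delta f 1 (pd f 0 1) x₀ y₀ * Delta f 3 f x₀ y₀ +
        6 * pd f 0 1 x₀ y₀ * Delta f 2 (pd f 0 1) x₀ y₀ * Delta f 2 f x₀ y₀ -
        3 * pd f 0 2 x₀ y₀ * (Delta f 2 f x₀ y₀) ^ 2 -
        12 * (Delta f 1 (pd f 0 1) x₀ y₀) ^ 2 * Delta f 2 f x₀ y₀ := by
  have hfSm : St4.Sm (x₀, y₀) (Function.uncurry f) := hf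
  have M : ∀ p r : ℕ, ∀ᶠ x in 𝓝 x₀, HasDerivAt (fun t => pd f p r t (y t))
      (pd f (p+1) r x (y x) + pd f p (r+1) x (y x) * iteratedDeriv 1 y x) x := by
    intro p r
    filter_upwards [St4.master hfSm hy hy0 p r] with x h
    rwa [show deriv y = iteratedDeriv 1 y from iteratedDeriv_one.symm] at h
  have Yd : ∀ k : ℕ, ∀ᶠ x in 𝓝 x₀, HasDerivAt (iteratedDeriv k y)
      (iteratedDeriv (k+1) y x) x := St4.ydiff hy
  have hE1 : ∀ᶠ x in 𝓝 x₀, pd f 1 0 x (y x) + pd f 0 1 x (y x) * iteratedDeriv 1 y x = 0 := by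
    filter_upwards [M 0 0, himp.eventually_nhds] with x hM h0
    have h00 : (fun t => pd f 0 0 t (y t)) =ᶠ[𝓝 x] (fun _ => (0:ℝ)) := by
      filter_upwards [h0] with t ht
      simpa [pd] using ht
    exact hM.unique ((hasDerivAt_const x (0:ℝ)).congr_of_eventuallyEq h00)
  have hd2 : ∀ᶠ x in 𝓝 x₀, HasDerivAt (fun x => pd f 1 0 x (y x) + pd f 0 1 x (y x) * iteratedDeriv 1 y x) (pd f 0 2 x (y x) * iteratedDeriv 1 y x ^ 2 + 2 * pd f 1 1 x (y x) * iteratedDeriv 1 y x + pd f 2 0 x (y x) + pd f 0 1 x (y x) * iteratedDeriv 2 y x) x := by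
    filter_upwards [M 0 1, M 1 0, Yd 1] with x h01 h10 hY1
    have built := (h10.add (h01.mul hY1))
    refine built.congr_deriv ?_
    push_cast
    ring
  have hE2 : ∀ᶠ x in 𝓝 x₀, pd f 0 2 x (y x) * iteratedDeriv 1 y x ^ 2 + 2 * pd f 1 1 x (y x) * iteratedDeriv 1 y x + pd f 2 0 x (y x) + pd f 0 1 x (y x) * iteratedDeriv 2 y x = 0 := by
    filter_upwards [hd2, hE1.eventually_nhds] with x hdx hprev
    have h0 : (fun x => pd f 1 0 x (y x) + pd f 0 1 x (y x) * iteratedDeriv 1 y x) =ᶠ[𝓝 x] (fun _ => (0:ℝ)) := by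
      filter_upwards [hprev] with t ht
      exact ht
    exact hdx.unique ((hasDerivAt_const x (0:ℝ)).congr_of_eventuallyEq h0)
  have hd3 : ∀ᶠ x in 𝓝 x₀, HasDerivAt (fun x => pd f 0 2 x (y x) * iteratedDeriv 1 y x ^ 2 + 2 * pd f 1 1 x (y x) * iteratedDeriv 1 y x + pd f 2 0 x (y x) + pd f 0 1 x (y x) * iteratedDeriv 2 y x) (pd f 0 3 x (y x) * iteratedDeriv 1 y x ^ 3 + 3 * pd f 1 2 x (y x) * iteratedDeriv 1 y x ^ 2 + 3 * pd f 2 1 x (y x) * iteratedDeriv 1 y x + pd f 3 0 x (y x) + 3 * pd f 0 2 x (y x) * iteratedDeriv 1 y x * iteratedDeriv 2 y x + 3 * pd f 1 1 x (y x) * iteratedDeriv 2 y x + pd f 0 1 x (y x) * iteratedDeriv 3 y x) x := by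
    filter_upwards [M 0 1, M 0 2, M 1 1, M 2 0, Yd 1, Yd 2] with x h01 h02 h11 h20 hY1 hY2
    have built := ((((h02.mul (hY1.pow 2)).add (((hasDerivAt_const x ((2):ℝ)).mul h11).mul hY1)).add h20).add (h01.mul hY2))
    refine built.congr_deriv ?_
    push_cast
    simp only [Pi.mul_apply, Pi.pow_apply]
    ring
  have hE3 : ∀ᶠ x in 𝓝 x₀, pd f 0 3 x (y x) * iteratedDeriv 1 y x ^ 3 + 3 * pd f 1 2 x (y x) * iteratedDeriv 1 y x ^ 2 + 3 * pd f 2 1 x (y x) * iteratedDeriv 1 y x + pd f 3 0 x (y x) + 3 * pd f 0 2 x (y x) * iteratedDeriv 1 y x * iteratedDeriv 2 y x + 3 * pd f 1 1 x (y x) * iteratedDeriv 2 y x + pd f 0 1 x (y x) * iteratedDeriv 3 y x = 0 := by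
    filter_upwards [hd3, hE2.eventually_nhds] with x hdx hprev
    have h0 : (fun x => pd f 0 2 x (y x) * iteratedDeriv 1 y x ^ 2 + 2 * pd f 1 1 x (y x) * iteratedDeriv 1 y x + pd f 2 0 x (y x) + pd f 0 1 x (y x) * iteratedDeriv 2 y x) =ᶠ[𝓝 x] (fun _ => (0:ℝ)) := by
      filter_upwards [hprev] with t ht
      exact ht
    exact hdx.unique ((hasDerivAt_const x (0:ℝ)).congr_of_eventuallyEq h0)
  have hd4 : ∀ᶠ x in 𝓝 x₀, HasDerivAt (fun x => pd f 0 3 x (y x) * iteratedDeriv 1 y x ^ 3 + 3 * pd f 1 2 x (y x) * iteratedDeriv 1 y x ^ 2 + 3 * pd f 2 1 x (y x) * iteratedDeriv 1 y x + pd f 3 0 x (y x) + 3 * pd f 0 2 x (y x) * iteratedDeriv 1 y x * iteratedDeriv 2 y x + 3 * pd f 1 1 x (y x) * iteratedDeriv 2 y x + pd f 0 1 x (y x) * iteratedDeriv 3 y x) (pd f 0 4 x (y x) * iteratedDeriv 1 y x ^ 4 + 4 * pd f 1 3 x (y x) * iteratedDeriv 1 y x ^ 3 + 6 * pd f 2 2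 x (y x) * iteratedDeriv 1 y x ^ 2 + 4 * pd f 3 1 x (y x) * iteratedDeriv 1 y x + pd f 4 0 x (y x) + 6 * pd f 0 3 x (y x) * iteratedDeriv 1 y x ^ 2 * iteratedDeriv 2 y x + 12 * pd f 1 2 x (y x) * iteratedDeriv 1 y x * iteratedDeriv 2 y x + 6 * pd f 2 1 x (y x) * iteratedDeriv 2 y x + 3 * pd f 0 2 x (y x) * iteratedDeriv 2 y x ^ 2 + 4 * pd f 0 2 x (y x) * iteratedDeriv 1 y x * iteratedDeriv 3 y x + 4 * pd f 1 1 x (y x) * iteratedDeriv 3 y x + pd f 0 1 x (y x) * iteratedDeriv 4 y x) x := by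
    filter_upwards [M 0 1, M 0 2, M 0 3, M 1 1, M 1 2, M 2 1, M 3 0, Yd 1, Yd 2, Yd 3] with x h01 h02 h03 h11 h12 h21 h30 hY1 hY2 hY3
    have built := (((((((h03.mul (hY1.pow 3)).add (((hasDerivAt_const x ((3):ℝ)).mul h12).mul (hY1.pow 2))).add (((hasDerivAt_const x ((3):ℝ)).mul h21).mul hY1)).add h30).add ((((hasDerivAt_const x ((3):ℝ)).mul h02).mul hY1).mul hY2)).add (((hasDerivAt_const x ((3):ℝ)).mul h11).mul hY2)).add (h01.mul hY3))
    refine built.congr_deriv ?_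
    push_cast
    simp only [Pi.mul_apply, Pi.pow_apply]
    ring
  have hE4 : ∀ᶠ x in 𝓝 x₀, pd f 0 4 x (y x) * iteratedDeriv 1 y x ^ 4 + 4 * pd f 1 3 x (y x) * iteratedDeriv 1 y x ^ 3 + 6 * pd f 2 2 x (y x) * iteratedDeriv 1 y x ^ 2 + 4 * pd f 3 1 x (y x) * iteratedDeriv 1 y x + pd f 4 0 x (y x) + 6 * pd f 0 3 x (y x) * iteratedDeriv 1 y x ^ 2 * iteratedDeriv 2 y x + 12 * pd f 1 2 x (y x) * iteratedDeriv 1 y x * iteratedDeriv 2 y x + 6 * pd f 2 1 x (y x) * iteratedDeriv 2 y x + 3 * pd f 0 2 x (y x) * iteratedDeriv 2 y x ^ 2 + 4 * pd f 0 2 x (y x) * iteratedDeriv 1 y x * iteratedDeriv 3 y x + 4 * pd f 1 1 x (y x) * iteratedDeriv 3 y x + pd f 0 1 x (y x) * iteratedDeriv 4 y x = 0 := by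
    filter_upwards [hd4, hE3.eventually_nhds] with x hdx hprev
    have h0 : (fun x => pd f 0 3 x (y x) * iteratedDeriv 1 y x ^ 3 + 3 * pd f 1 2 x (y x) * iteratedDeriv 1 y x ^ 2 + 3 * pd f 2 1 x (y x) * iteratedDeriv 1 y x + pd f 3 0 x (y x) + 3 * pd f 0 2 x (y x) * iteratedDeriv 1 y x * iteratedDeriv 2 y x + 3 * pd f 1 1 x (y x) * iteratedDeriv 2 y x + pd f 0 1 x (y x) * iteratedDeriv 3 y x) =ᶠ[𝓝 x] (fun _ => (0:ℝ)) := by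
      filter_upwards [hprev] with t ht
      exact ht
    exact hdx.unique ((hasDerivAt_const x (0:ℝ)).congr_of_eventuallyEq h0)
  have e1 := hE1.self_of_nhds
  have e2 := hE2.self_of_nhds
  have e3 := hE3.self_of_nhds
  have e4 := hE4.self_of_nhds
  rw [hy0] at e1 e2 e3 e4
  simp only [Delta, Finset.sum_range_succ, Finset.sum_range_zero, St4.pd01]
  norm_num [Nat.choose]
  linear_combination ((pd f 0 1 x₀ y₀)^6) * e4 + (-4*(pd f 0 1 x₀ y₀)^5*(pd f 0 2 x₀ y₀)*(iteratedDeriv 1 y x₀) - 4*(pd f 0 1 x₀ y₀)^5*(pd f 1 1 x₀ y₀)) * e3 + (15*(pd f 0 1 x₀ y₀)^4*(pd f 0 2 x₀ y₀)^2*(iteratedDeriv 1 y x₀)^2 + 30*(pd f 0 1 x₀ y₀)^4*(pd f 1 1 x₀ y₀)*(pd f 0 2 x₀ y₀)*(iteratedDeriv 1 y x₀) + 12*(pd f 0 1 x₀ y₀)^4*(pd f 1 1 x₀ y₀)^2 + 3*(pd f 0 1 x₀ y₀)^4*(pd f 2 0 x₀ y₀)*(pd f 0 2 x₀ y₀) -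 6*(pd f 0 1 x₀ y₀)^5*(pd f 0 3 x₀ y₀)*(iteratedDeriv 1 y x₀)^2 - 12*(pd f 0 1 x₀ y₀)^5*(pd f 1 2 x₀ y₀)*(iteratedDeriv 1 y x₀) - 6*(pd f 0 1 x₀ y₀)^5*(pd f 2 1 x₀ y₀) - 3*(pd f 0 1 x₀ y₀)^5*(pd f 0 2 x₀ y₀)*(iteratedDeriv 2 y x₀)) * e2 + (-15*(pd f 0 1 x₀ y₀)^3*(pd f 0 2 x₀ y₀)^3*(iteratedDeriv 1 y x₀)^3 - 60*(pd f 0 1 x₀ y₀)^3*(pd f 1 1 x₀ y₀)*(pd f 0 2 x₀ y₀)^2*(iteratedDeriv 1 y x₀)^2 - 72*(pd f 0 1 x₀ y₀)^3*(pd f 1 1 x₀ y₀)^2*(pd f 0 2 x₀ y₀)*(iteratedDeriv 1 y x₀) - 24*(pd f 0 1 x₀ y₀)^3*(pd f 1 1 x₀ y₀)^3 - 18*(pd f 0 1 x₀ y₀)^3*(pd f 2 0 x₀ y₀)*(pd f 0 2 x₀ y₀)^2*(iteratedDeriv 1 y x₀) - 36*(pd f 0 1 x₀ y₀)^3*(pd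 f 2 0 x₀ y₀)*(pd f 1 1 x₀ y₀)*(pd f 0 2 x₀ y₀) + 10*(pd f 0 1 x₀ y₀)^4*(pd f 0 2 x₀ y₀)*(pd f 0 3 x₀ y₀)*(iteratedDeriv 1 y x₀)^3 + 24*(pd f 0 1 x₀ y₀)^4*(pd f 0 2 x₀ y₀)*(pd f 1 2 x₀ y₀)*(iteratedDeriv 1 y x₀)^2 + 18*(pd f 0 1 x₀ y₀)^4*(pd f 0 2 x₀ y₀)*(pd f 2 1 x₀ y₀)*(iteratedDeriv 1 y x₀) + 4*(pd f 0 1 x₀ y₀)^4*(pd f 0 2 x₀ y₀)*(pd f 3 0 x₀ y₀) + 16*(pd f 0 1 x₀ y₀)^4*(pd f 1 1 x₀ y₀)*(pd f 0 3 x₀ y₀)*(iteratedDeriv 1 y x₀)^2 + 36*(pd f 0 1 x₀ y₀)^4*(pd f 1 1 x₀ y₀)*(pd f 1 2 x₀ y₀)*(iteratedDeriv 1 y x₀) + 24*(pd f 0 1 x₀ y₀)^4*(pd f 1 1 x₀ y₀)*(pd f 2 1 x₀ y₀) + 6*(pd f 0 1 x₀ y₀)^4*(pd f 2 0 x₀ y₀)*(pd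 f 0 3 x₀ y₀)*(iteratedDeriv 1 y x₀) + 12*(pd f 0 1 x₀ y₀)^4*(pd f 2 0 x₀ y₀)*(pd f 1 2 x₀ y₀) - 1*(pd f 0 1 x₀ y₀)^5*(pd f 0 4 x₀ y₀)*(iteratedDeriv 1 y x₀)^3 - 4*(pd f 0 1 x₀ y₀)^5*(pd f 1 3 x₀ y₀)*(iteratedDeriv 1 y x₀)^2 - 6*(pd f 0 1 x₀ y₀)^5*(pd f 2 2 x₀ y₀)*(iteratedDeriv 1 y x₀) - 4*(pd f 0 1 x₀ y₀)^5*(pd f 3 1 x₀ y₀) + 15*(pd f 1 0 x₀ y₀)*(pd f 0 1 x₀ y₀)^2*(pd f 0 2 x₀ y₀)^3*(iteratedDeriv 1 y x₀)^2 + 60*(pd f 1 0 x₀ y₀)*(pd f 0 1 x₀ y₀)^2*(pd f 1 1 x₀ y₀)*(pd f 0 2 x₀ y₀)^2*(iteratedDeriv 1 y x₀) + 72*(pd f 1 0 x₀ y₀)*(pd f 0 1 x₀ y₀)^2*(pd f 1 1 x₀ y₀)^2*(pd f 0 2 x₀ y₀) + 18*(pd f 1 0 x₀ y₀)*(pd f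 0 1 x₀ y₀)^2*(pd f 2 0 x₀ y₀)*(pd f 0 2 x₀ y₀)^2 - 10*(pd f 1 0 x₀ y₀)*(pd f 0 1 x₀ y₀)^3*(pd f 0 2 x₀ y₀)*(pd f 0 3 x₀ y₀)*(iteratedDeriv 1 y x₀)^2 - 24*(pd f 1 0 x₀ y₀)*(pd f 0 1 x₀ y₀)^3*(pd f 0 2 x₀ y₀)*(pd f 1 2 x₀ y₀)*(iteratedDeriv 1 y x₀) - 18*(pd f 1 0 x₀ y₀)*(pd f 0 1 x₀ y₀)^3*(pd f 0 2 x₀ y₀)*(pd f 2 1 x₀ y₀) - 16*(pd f 1 0 x₀ y₀)*(pd f 0 1 x₀ y₀)^3*(pd f 1 1 x₀ y₀)*(pd f 0 3 x₀ y₀)*(iteratedDeriv 1 y x₀) - 36*(pd f 1 0 x₀ y₀)*(pd f 0 1 x₀ y₀)^3*(pd f 1 1 x₀ y₀)*(pd f 1 2 x₀ y₀) - 6*(pd f 1 0 x₀ y₀)*(pd f 0 1 x₀ y₀)^3*(pd f 2 0 x₀ y₀)*(pd f 0 3 x₀ y₀) + (pd f 1 0 x₀ y₀)*(pd f 0 1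 x₀ y₀)^4*(pd f 0 4 x₀ y₀)*(iteratedDeriv 1 y x₀)^2 + 4*(pd f 1 0 x₀ y₀)*(pd f 0 1 x₀ y₀)^4*(pd f 1 3 x₀ y₀)*(iteratedDeriv 1 y x₀) + 6*(pd f 1 0 x₀ y₀)*(pd f 0 1 x₀ y₀)^4*(pd f 2 2 x₀ y₀) - 15*(pd f 1 0 x₀ y₀)^2*(pd f 0 1 x₀ y₀)*(pd f 0 2 x₀ y₀)^3*(iteratedDeriv 1 y x₀) - 60*(pd f 1 0 x₀ y₀)^2*(pd f 0 1 x₀ y₀)*(pd f 1 1 x₀ y₀)*(pd f 0 2 x₀ y₀)^2 + 10*(pd f 1 0 x₀ y₀)^2*(pd f 0 1 x₀ y₀)^2*(pd f 0 2 x₀ y₀)*(pd f 0 3 x₀ y₀)*(iteratedDeriv 1 y x₀) + 24*(pd f 1 0 x₀ y₀)^2*(pd f 0 1 x₀ y₀)^2*(pd f 0 2 x₀ y₀)*(pd f 1 2 x₀ y₀) + 16*(pd f 1 0 x₀ y₀)^2*(pd f 0 1 x₀ y₀)^2*(pd f 1 1 x₀ y₀)*(pd f 0 3 x₀ y₀)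 - 1*(pd f 1 0 x₀ y₀)^2*(pd f 0 1 x₀ y₀)^3*(pd f 0 4 x₀ y₀)*(iteratedDeriv 1 y x₀) - 4*(pd f 1 0 x₀ y₀)^2*(pd f 0 1 x₀ y₀)^3*(pd f 1 3 x₀ y₀) + 15*(pd f 1 0 x₀ y₀)^3*(pd f 0 2 x₀ y₀)^3 - 10*(pd f 1 0 x₀ y₀)^3*(pd f 0 1 x₀ y₀)*(pd f 0 2 x₀ y₀)*(pd f 0 3 x₀ y₀) + (pd f 1 0 x₀ y₀)^3*(pd f 0 1 x₀ y₀)^2*(pd f 0 4 x₀ y₀)) * e1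
end
end

section
/- For every infinitely differentiable function g of two variables, every integer l ≥ 0, and every point in the domain where f is infinitely differentiable, one has the identity Δ_{l+1} g = f_y · Δ_l(g_x) − f_x · Δ_l(g_y), where g_x and g_y are the first partial derivatives of g and all expressions are evaluated at the same point. -/
open Filter Topology

open Function in
lemma deriv_fst (h : ℝ → ℝ → ℝ) (x y : ℝ) (H : DifferentiableAt ℝ (uncurry h) (x, y)) :
    deriv (fun x' => h x' y) x = fderiv ℝ (uncurry h) (x, y) (1, 0) := by
  simpa [Function.comp_def] using ((H.hasFDerivAt.comp x (hasFDerivAt_prodMk_left x y)).hasDerivAt).deriv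

open Function in
lemma deriv_snd (h : ℝ → ℝ → ℝ) (x y : ℝ) (H : DifferentiableAt ℝ (uncurry h) (x, y)) :
    deriv (fun y' => h x y') y = fderiv ℝ (uncurry h) (x, y) (0, 1) := by
  simpa [Function.comp_def] using ((H.hasFDerivAt.comp y (hasFDerivAt_prodMk_right x y)).hasDerivAt).deriv

open Function in
lemma smooth_fderiv_apply (h : ℝ → ℝ → ℝ) (hh : ContDiff ℝ (⊤ : ℕ∞) (uncurry h)) (v : ℝ × ℝ) :
    ContDiff ℝ (⊤ : ℕ∞) (fun p : ℝ × ℝ => fderiv ℝ (uncurry h) p v) :=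
  (hh.fderiv_right (by exact_mod_cast le_refl _)).clm_apply contDiff_const

open Function in
lemma smooth_Dx (h : ℝ → ℝ → ℝ) (hh : ContDiff ℝ (⊤ : ℕ∞) (uncurry h)) :
    ContDiff ℝ (⊤ : ℕ∞) (uncurry (fun x y => deriv (fun x' => h x' y) x)) := by
  have : uncurry (fun x y => deriv (fun x' => h x' y) x)
      = fun p : ℝ × ℝ => fderiv ℝ (uncurry h) p (1, 0) := by
    funext p
    exact deriv_fst h p.1 p.2 (hh.differentiable (by simp) _)
  rw [this]; exact smooth_fderiv_apply h hh _

open Function in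
lemma smooth_Dy (h : ℝ → ℝ → ℝ) (hh : ContDiff ℝ (⊤ : ℕ∞) (uncurry h)) :
    ContDiff ℝ (⊤ : ℕ∞) (uncurry (fun x y => deriv (fun y' => h x y') y)) := by
  have : uncurry (fun x y => deriv (fun y' => h x y') y)
      = fun p : ℝ × ℝ => fderiv ℝ (uncurry h) p (0, 1) := by
    funext p
    exact deriv_snd h p.1 p.2 (hh.differentiable (by simp) _)
  rw [this]; exact smooth_fderiv_apply h hh _

open Function in
lemma clairaut (h : ℝ → ℝ → ℝ) (hh : ContDiff ℝ (⊤ : ℕ∞) (uncurry h)) (x y : ℝ) :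
    deriv (fun x' => deriv (fun y' => h x' y') y) x
      = deriv (fun y' => deriv (fun x' => h x' y') x) y := by
  set H := uncurry h with hH
  have hdiff : Differentiable ℝ H := hh.differentiable (by simp)
  have hd2 : Differentiable ℝ (fderiv ℝ H) :=
    (hh.fderiv_right (m := ((⊤:ℕ∞) : WithTop ℕ∞)) (by exact_mod_cast le_refl _)).differentiable
      (by simp)
  have hDy : ∀ x' y', deriv (fun y' => h x' y') y' = fderiv ℝ H (x', y') (0, 1) :=
    fun x' y' => deriv_snd h x' y' (hdiff _)
  have hDx : ∀ x' y', deriv (fun x' => h x' y') x' = fderiv ℝ H (x', y') (1, 0) :=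
    fun x' y' => deriv_fst h x' y' (hdiff _)
  have k1 : ∀ v w : ℝ × ℝ, deriv (fun x' => fderiv ℝ H (x', y) v) x
      = fderiv ℝ (fderiv ℝ H) (x, y) (1, 0) v := by
    intro v w
    have hs := smooth_fderiv_apply h hh v
    rw [deriv_fst (fun x' y' => fderiv ℝ H (x', y') v) x y
      (show DifferentiableAt ℝ (uncurry fun x' y' => fderiv ℝ H (x', y') v) (x,y) from
        hs.differentiable (by simp) _)]
    rw [show (uncurry fun x' y' => fderiv ℝ H (x', y') v) = fun p : ℝ × ℝ => fderiv ℝ H p v from rfl]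
    rw [fderiv_clm_apply (hd2 _) (differentiableAt_const v)]
    simp
  have k2 : ∀ v : ℝ × ℝ, deriv (fun y' => fderiv ℝ H (x, y') v) y
      = fderiv ℝ (fderiv ℝ H) (x, y) (0, 1) v := by
    intro v
    have hs := smooth_fderiv_apply h hh v
    rw [deriv_snd (fun x' y' => fderiv ℝ H (x', y') v) x y
      (show DifferentiableAt ℝ (uncurry fun x' y' => fderiv ℝ H (x', y') v) (x,y) from
        hs.differentiable (by simp) _)]
    rw [show (uncurry fun x' y' => fderiv ℝ H (x', y') v) = fun p : ℝ × ℝ => fderiv ℝ H p v from rfl]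
    rw [fderiv_clm_apply (hd2 _) (differentiableAt_const v)]
    simp
  have hsymm : IsSymmSndFDerivAt ℝ H (x, y) :=
    hh.contDiffAt.isSymmSndFDerivAt (by rw [minSmoothness_of_isRCLikeNormedField]; change ((2:ℕ∞) : WithTop ℕ∞) ≤ _; exact WithTop.coe_le_coe.mpr le_top)
  calc deriv (fun x' => deriv (fun y' => h x' y') y) x
      = deriv (fun x' => fderiv ℝ H (x', y) (0, 1)) x := by
        congr 1; funext x'; exact hDy x' y
    _ = fderiv ℝ (fderiv ℝ H) (x, y) (1, 0) (0, 1) := k1 _ (0,1)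
    _ = fderiv ℝ (fderiv ℝ H) (x, y) (0, 1) (1, 0) := hsymm.eq _ _
    _ = deriv (fun y' => fderiv ℝ H (x, y') (1, 0)) y := (k2 _).symm
    _ = deriv (fun y' => deriv (fun x' => h x' y') x) y := by
        congr 1; funext y'; exact (hDx x y').symm

open Function in
lemma swap : ∀ (r : ℕ) (h : ℝ → ℝ → ℝ), ContDiff ℝ (⊤:ℕ∞) (uncurry h) → ∀ x y : ℝ,
    deriv (fun x' => iteratedDeriv r (fun y' => h x' y') y) x
      = iteratedDeriv r (fun y' => deriv (fun x' => h x' y') x) y := by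
  intro r
  induction r with
  | zero => intro h _ x y; simp
  | succ r ih =>
    intro h hh x y
    have hDy := smooth_Dy h hh
    have e1 : (fun x' => iteratedDeriv (r+1) (fun y' => h x' y') y)
        = fun x' => iteratedDeriv r (fun y' => deriv (fun y'' => h x' y'') y') y := by
      funext x'; rw [iteratedDeriv_succ']
    rw [e1, ih (fun x y => deriv (fun y' => h x y') y) hDy x y, iteratedDeriv_succ']
    congr 1
    funext y'
    exact clairaut h hh x y'

open Function in
lemma pd_Dx (g : ℝ → ℝ → ℝ) (hg : ContDiff ℝ (⊤:ℕ∞) (uncurry g)) (p r : ℕ) (x y : ℝ) :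
    pd (pd g 1 0) p r x y = pd g (p+1) r x y := by
  simp only [pd, iteratedDeriv_one, iteratedDeriv_zero]
  rw [iteratedDeriv_succ']
  congr 1
  funext x'
  exact (swap r g hg x' y).symm

lemma pd_Dy (g : ℝ → ℝ → ℝ) (p r : ℕ) (x y : ℝ) :
    pd (pd g 0 1) p r x y = pd g p (r+1) x y := by
  simp only [pd, iteratedDeriv_zero, iteratedDeriv_one]
  congr 1
  funext x'
  rw [iteratedDeriv_succ']

lemma pascal_sum (l : ℕ) (u : ℕ → ℝ) :
    ∑ j ∈ Finset.range (l+2), ((l+1).choose j : ℝ) * u j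
      = ∑ j ∈ Finset.range (l+1), (l.choose j : ℝ) * u j
        + ∑ j ∈ Finset.range (l+1), (l.choose j : ℝ) * u (j+1) := by
  rw [Finset.sum_range_succ' (fun j => ((l+1).choose j : ℝ) * u j) (l+1)]
  simp only [Nat.choose_succ_succ, Nat.cast_add, add_mul, Finset.sum_add_distrib]
  have h1 : ∑ j ∈ Finset.range (l+1), (l.choose (j+1) : ℝ) * u (j+1)
      = ∑ j ∈ Finset.range l, (l.choose (j+1) : ℝ) * u (j+1) := by
    rw [Finset.sum_range_succ]; simp
  have h2 : ∑ j ∈ Finset.range (l+1), (l.choose j : ℝ) * u j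
      = (∑ j ∈ Finset.range l, (l.choose (j+1) : ℝ) * u (j+1)) + (l.choose 0 : ℝ) * u 0 := by
    rw [Finset.sum_range_succ' (fun j => (l.choose j : ℝ) * u j) l]
  rw [h1, h2]
  simp
  ring

theorem statement5 (f : ℝ → ℝ → ℝ) (g : ℝ → ℝ → ℝ)
    (hg : ContDiff ℝ (⊤ : ℕ∞) (Function.uncurry g))
    (l : ℕ) (a b : ℝ)
    (hf : ContDiffAt ℝ (⊤ : ℕ∞) (Function.uncurry f) (a, b)) :
    Delta f (l + 1) g a b =
      pd f 0 1 a b * Delta f l (pd g 1 0) a b -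
        pd f 1 0 a b * Delta f l (pd g 0 1) a b := by
  have hgx : ∀ p r (x y : ℝ), pd (pd g 1 0) p r x y = pd g (p+1) r x y :=
    fun p r x y => pd_Dx g hg p r x y
  have hgy : ∀ p r (x y : ℝ), pd (pd g 0 1) p r x y = pd g p (r+1) x y :=
    fun p r x y => pd_Dy g p r x y
  simp only [Delta, hgx, hgy]
  set X := pd f 1 0 a b with hX
  set Y := pd f 0 1 a b with hY
  set u : ℕ → ℝ := fun j => (-1:ℝ)^j * pd g (l+1-j) j a b * X^j * Y^(l+1-j) with hu
  have key := pascal_sum l u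
  have L : ∑ j ∈ Finset.range (l + 1 + 1),
      (-1:ℝ)^j * ((l+1).choose j : ℝ) * pd g (l+1-j) j a b * X^j * Y^(l+1-j)
      = ∑ j ∈ Finset.range (l+2), ((l+1).choose j : ℝ) * u j :=
    Finset.sum_congr rfl (fun j _ => by simp only [hu]; ring)
  have R1 : ∑ j ∈ Finset.range (l+1), (l.choose j : ℝ) * u j
      = Y * ∑ j ∈ Finset.range (l+1),
          (-1:ℝ)^j * (l.choose j : ℝ) * pd g (l-j+1) j a b * X^j * Y^(l-j) := by
    rw [Finset.mul_sum]
    refine Finset.sum_congr rfl (fun j hj => ?_)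
    have hj' : j ≤ l := Nat.lt_succ_iff.mp (Finset.mem_range.mp hj)
    have e1 : l + 1 - j = (l - j) + 1 := by omega
    simp only [hu, e1, pow_succ]
    ring
  have R2 : ∑ j ∈ Finset.range (l+1), (l.choose j : ℝ) * u (j+1)
      = -(X * ∑ j ∈ Finset.range (l+1),
          (-1:ℝ)^j * (l.choose j : ℝ) * pd g (l-j) (j+1) a b * X^j * Y^(l-j)) := by
    rw [Finset.mul_sum, ← Finset.sum_neg_distrib]
    refine Finset.sum_congr rfl (fun j hj => ?_)
    have e2 : l + 1 - (j+1) = l - j := by omega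
    simp only [hu, e2, pow_succ]
    ring
  rw [L, key, R1, R2]
  ring
end

section
/- Let n ≥ 2 and β = (μ_{l,r}) ∈ A_{n+1}. Then all the families β_−^{l̂,r̂}, β_b^{l̂,r̂}, and β_d lie in A_n whenever they are defined. Moreover, let α̃ ∈ Ã_n with image α ∈ A_n under the canonical bijection, and let β̃ ∈ Ã_{n+1} be the element corresponding to β. Then: (i) if (l̂, r̂) = (l̃ + 1, r̃), then α̃_+^{l̃,r̃} is defined and equals β̃ if and only if β_−^{l̂,r̂} is defined and equals α; (ii) if (l̂, r̂) = (l̃ − 1, r̃ + 1), then α̃_t^{l̃,r̃} is defined and equals β̃ if and only if β_b^{l̂,r̂} is defined and equals α; (iii) β̃ = α̃_m if and only if β_d is defined and equals α. -/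
/-- Membership in the set `A_n`: finitely supported families `(m_{l,r})` of nonnegative
integers indexed by pairs `(l, r)` with `l + r ≥ 2`, with `Σ l·m_{l,r} = n` and
`Σ r·m_{l,r} = Σ m_{l,r} − 1`. -/
def Amem (n : ℕ) (m : (ℕ × ℕ) →₀ ℕ) : Prop :=
  (∀ p ∈ m.support, 2 ≤ p.1 + p.2) ∧
  (m.sum fun p k => p.1 * k) = n ∧
  (m.sum fun p k => p.2 * k) + 1 = m.sum fun _ k => k

/-- Membership in the set `Ã_n`: finitely supported families `(m_{l,r})` indexed by all
pairs `(l, r)` with `m_{0,0} = m_{1,0} = 0`, `Σ m_{l,r} = n − 1`, `Σ l·m_{l,r} = n`,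
and `Σ r·m_{l,r} = n − 2`. -/
def AtildeMem (n : ℕ) (m : (ℕ × ℕ) →₀ ℕ) : Prop :=
  m (0, 0) = 0 ∧ m (1, 0) = 0 ∧
  (m.sum fun _ k => k) + 1 = n ∧
  (m.sum fun p k => p.1 * k) = n ∧
  (m.sum fun p k => p.2 * k) + 2 = n

/-- `α̃_+^{l̃,r̃}`: decrease `m_{l̃,r̃}` by 1, increase `m_{0,1}` and `m_{l̃+1,r̃}` by 1. -/
noncomputable def plusOp (m : (ℕ × ℕ) →₀ ℕ) (l r : ℕ) : (ℕ × ℕ) →₀ ℕ :=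
  m + Finsupp.single (0, 1) 1 + Finsupp.single (l + 1, r) 1 - Finsupp.single (l, r) 1

/-- `α̃_t^{l̃,r̃}`: decrease `m_{l̃,r̃}` by 1, increase `m_{2,0}` and `m_{l̃−1,r̃+1}` by 1. -/
noncomputable def tOp (m : (ℕ × ℕ) →₀ ℕ) (l r : ℕ) : (ℕ × ℕ) →₀ ℕ :=
  m + Finsupp.single (2, 0) 1 + Finsupp.single (l - 1, r + 1) 1 - Finsupp.single (l, r) 1

/-- `α̃_m`: increase `m_{1,1}` by 1. -/
noncomputable def mOp (m : (ℕ × ℕ) →₀ ℕ) : (ℕ × ℕ) →₀ ℕ :=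
  m + Finsupp.single (1, 1) 1

/-- `β_−^{l̂,r̂}`: decrease `μ_{l̂,r̂}` by 1, increase `μ_{l̂−1,r̂}` by 1. -/
noncomputable def minusOp (μ : (ℕ × ℕ) →₀ ℕ) (l r : ℕ) : (ℕ × ℕ) →₀ ℕ :=
  μ + Finsupp.single (l - 1, r) 1 - Finsupp.single (l, r) 1

/-- `β_b^{l̂,r̂}`: decrease `μ_{l̂,r̂}` and `μ_{2,0}` by 1, increase `μ_{l̂+1,r̂−1}` by 1. -/
noncomputable def bOp (μ : (ℕ × ℕ) →₀ ℕ) (l r : ℕ) : (ℕ × ℕ) →₀ ℕ :=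
  μ + Finsupp.single (l + 1, r - 1) 1 - Finsupp.single (l, r) 1 - Finsupp.single (2, 0) 1

/-- `β_d`: decrease `μ_{1,1}` by 1. -/
noncomputable def dOp (μ : (ℕ × ℕ) →₀ ℕ) : (ℕ × ℕ) →₀ ℕ :=
  μ - Finsupp.single (1, 1) 1


private def S10 (f : ℕ × ℕ → ℕ) (ν : (ℕ × ℕ) →₀ ℕ) : ℕ := ν.sum fun p k => f p * k

private lemma S10_add (f : ℕ × ℕ → ℕ) (ν ρ : (ℕ × ℕ) →₀ ℕ) :
    S10 f (ν + ρ) = S10 f ν + S10 f ρ :=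
  Finsupp.sum_add_index' (fun a => mul_zero (f a)) (fun a b₁ b₂ => mul_add (f a) b₁ b₂)

private lemma S10_single (f : ℕ × ℕ → ℕ) (a : ℕ × ℕ) (c : ℕ) :
    S10 f (Finsupp.single a c) = f a * c :=
  Finsupp.sum_single_index (mul_zero (f a))

private lemma S10_one (ν : (ℕ × ℕ) →₀ ℕ) : S10 (fun _ => 1) ν = ν.sum fun _ k => k :=
  Finsupp.sum_congr fun _ _ => one_mul _

private lemma sub_single_eq_iff10 {ν ρ : (ℕ×ℕ) →₀ ℕ} {b : ℕ×ℕ}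
    (h : Finsupp.single b 1 ≤ ν) :
    ν - Finsupp.single b 1 = ρ ↔ ν = ρ + Finsupp.single b 1 := by
  constructor
  · intro h'; rw [← h', tsub_add_cancel_of_le h]
  · intro h'; rw [h', add_tsub_cancel_right]

private lemma atilde_decomp10 {m : (ℕ×ℕ) →₀ ℕ} (h0 : m (0,0) = 0) (h1 : m (1,0) = 0) :
    m = m.filter (fun p : ℕ×ℕ => 2 ≤ p.1 + p.2) + Finsupp.single (0,1) (m (0,1)) := by
  ext ⟨a, b⟩
  rw [Finsupp.add_apply, Finsupp.filter_apply, Finsupp.single_apply]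
  by_cases h : 2 ≤ a + b
  · rw [if_pos h, if_neg (by simp [Prod.ext_iff]; omega), add_zero]
  · rw [if_neg h]
    have : (a = 0 ∧ b = 0) ∨ (a = 1 ∧ b = 0) ∨ (a = 0 ∧ b = 1) := by omega
    rcases this with ⟨rfl, rfl⟩ | ⟨rfl, rfl⟩ | ⟨rfl, rfl⟩
    · simpa using h0
    · simpa using h1
    · simp

theorem statement10 (n : ℕ) (hn : 2 ≤ n) (μ : (ℕ × ℕ) →₀ ℕ) (hμ : Amem (n + 1) μ) :
    (∀ l r : ℕ, 1 ≤ l → 3 ≤ l + r → 1 ≤ μ (l, r) → Amem n (minusOp μ l r)) ∧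
    (∀ l r : ℕ, 1 ≤ μ (2, 0) → 1 ≤ r → (l, r) ≠ (1, 1) → 1 ≤ μ (l, r) →
      Amem n (bOp μ l r)) ∧
    (1 ≤ μ (1, 1) → Amem n (dOp μ)) ∧
    (∀ m : (ℕ × ℕ) →₀ ℕ, AtildeMem n m →
      ∀ mβ : (ℕ × ℕ) →₀ ℕ, AtildeMem (n + 1) mβ →
        (mβ.filter fun p : ℕ × ℕ => 2 ≤ p.1 + p.2) = μ →
        -- (i): here (l̂, r̂) = (l̃ + 1, r̃)
        ((∀ lt rt : ℕ,
          (((2 ≤ lt + rt ∧ 1 ≤ m (lt, rt)) ∧ plusOp m lt rt = mβ) ↔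
            ((1 ≤ lt + 1 ∧ 3 ≤ (lt + 1) + rt ∧ 1 ≤ μ (lt + 1, rt)) ∧
              minusOp μ (lt + 1) rt = m.filter fun p : ℕ × ℕ => 2 ≤ p.1 + p.2))) ∧
        -- (ii): here (l̃, r̃) = (lh + 1, rt) and (l̂, r̂) = (lh, rt + 1)
        (∀ lh rt : ℕ,
          (((2 ≤ (lh + 1) + rt ∧ 1 ≤ lh + 1 ∧ (lh + 1, rt) ≠ (2, 0) ∧ 1 ≤ m (lh + 1, rt)) ∧
              tOp m (lh + 1) rt = mβ) ↔
            ((1 ≤ μ (2, 0) ∧ 1 ≤ rt + 1 ∧ (lh, rt + 1) ≠ (1, 1) ∧ 1 ≤ μ (lh, rt + 1)) ∧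
              bOp μ lh (rt + 1) = m.filter fun p : ℕ × ℕ => 2 ≤ p.1 + p.2))) ∧
        -- (iii)
        ((mOp m = mβ) ↔
          (1 ≤ μ (1, 1) ∧ dOp μ = m.filter fun p : ℕ × ℕ => 2 ≤ p.1 + p.2)))) := by
  obtain ⟨hμs, hμ1, hμ2⟩ := hμ
  have hS1 : S10 (fun p => p.1) μ = n + 1 := hμ1
  have hS2 : S10 (fun p => p.2) μ + 1 = S10 (fun _ => 1) μ := by rw [S10_one]; exact hμ2
  refine ⟨?_, ?_, ?_, ?_⟩
  · -- minusOp
    intro l r hl hlr h1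
    have ex : minusOp μ l r + Finsupp.single (l, r) 1 = μ + Finsupp.single (l-1, r) 1 := by
      rw [minusOp, tsub_add_cancel_of_le]
      rw [Finsupp.single_le_iff, Finsupp.add_apply, Finsupp.single_apply]
      split_ifs <;> omega
    have e1 := congrArg (S10 fun p => p.1) ex
    have e2 := congrArg (S10 fun p => p.2) ex
    have e3 := congrArg (S10 fun _ => 1) ex
    simp only [S10_add, S10_single, mul_one] at e1 e2 e3
    refine ⟨?_, ?_, ?_⟩
    · intro p hp
      obtain ⟨a, b⟩ := p
      rw [Finsupp.mem_support_iff, minusOp, Finsupp.tsub_apply, Finsupp.add_apply,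
        Finsupp.single_apply, Finsupp.single_apply] at hp
      by_cases hc : ((l:ℕ) - 1, r) = (a, b)
      · simp only [Prod.ext_iff] at hc
        show 2 ≤ a + b
        omega
      · rw [if_neg hc] at hp
        have hne : μ (a, b) ≠ 0 := by
          intro h0; rw [h0] at hp; simp at hp
        exact hμs (a, b) (Finsupp.mem_support_iff.mpr hne)
    · show S10 (fun p => p.1) (minusOp μ l r) = n
      omega
    · have goal2 : S10 (fun p => p.2) (minusOp μ l r) + 1
          = S10 (fun _ => 1) (minusOp μ l r) := by omega
      rw [S10_one] at goal2; exact goal2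
  · -- bOp
    intro l r h20 hr hne h1
    have hlr2 : 2 ≤ l + r := hμs (l, r) (Finsupp.mem_support_iff.mpr (by omega))
    have hlr20 : ((l : ℕ), r) ≠ ((2 : ℕ), (0 : ℕ)) := by
      simp only [ne_eq, Prod.mk.injEq]; omega
    have hle1 : Finsupp.single (l, r) 1 ≤ μ + Finsupp.single (l + 1, r - 1) 1 := by
      rw [Finsupp.single_le_iff, Finsupp.add_apply, Finsupp.single_apply]
      split_ifs <;> omega
    have hle2 : Finsupp.single ((2 : ℕ), (0 : ℕ)) 1 ≤
        μ + Finsupp.single (l + 1, r - 1) 1 - Finsupp.single (l, r) 1 := by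
      rw [Finsupp.single_le_iff, Finsupp.tsub_apply, Finsupp.add_apply,
        Finsupp.single_apply, Finsupp.single_apply, if_neg hlr20]
      split_ifs <;> omega
    have ex : bOp μ l r + Finsupp.single (2, 0) 1 + Finsupp.single (l, r) 1
        = μ + Finsupp.single (l + 1, r - 1) 1 := by
      rw [bOp, tsub_add_cancel_of_le hle2, tsub_add_cancel_of_le hle1]
    have e1 := congrArg (S10 fun p => p.1) ex
    have e2 := congrArg (S10 fun p => p.2) ex
    have e3 := congrArg (S10 fun _ => 1) ex
    simp only [S10_add, S10_single, mul_one] at e1 e2 e3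
    refine ⟨?_, ?_, ?_⟩
    · intro p hp
      obtain ⟨a, b⟩ := p
      rw [Finsupp.mem_support_iff, bOp, Finsupp.tsub_apply, Finsupp.tsub_apply,
        Finsupp.add_apply, Finsupp.single_apply, Finsupp.single_apply,
        Finsupp.single_apply] at hp
      by_cases hc : ((l : ℕ) + 1, r - 1) = (a, b)
      · simp only [Prod.ext_iff] at hc
        show 2 ≤ a + b
        omega
      · rw [if_neg hc] at hp
        have hne' : μ (a, b) ≠ 0 := by
          intro h0; rw [h0] at hp; simp at hp
        exact hμs (a, b) (Finsupp.mem_support_iff.mpr hne')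
    · show S10 (fun p => p.1) (bOp μ l r) = n
      omega
    · have goal2 : S10 (fun p => p.2) (bOp μ l r) + 1
          = S10 (fun _ => 1) (bOp μ l r) := by omega
      rw [S10_one] at goal2; exact goal2
  · -- dOp
    intro h1
    have ex : dOp μ + Finsupp.single (1, 1) 1 = μ := by
      rw [dOp, tsub_add_cancel_of_le]
      rwa [Finsupp.single_le_iff]
    have e1 := congrArg (S10 fun p => p.1) ex
    have e2 := congrArg (S10 fun p => p.2) ex
    have e3 := congrArg (S10 fun _ => 1) ex
    simp only [S10_add, S10_single, mul_one] at e1 e2 e3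
    refine ⟨?_, ?_, ?_⟩
    · intro p hp
      obtain ⟨a, b⟩ := p
      rw [Finsupp.mem_support_iff, dOp, Finsupp.tsub_apply, Finsupp.single_apply] at hp
      have hne' : μ (a, b) ≠ 0 := by
        intro h0; rw [h0] at hp; simp at hp
      exact hμs (a, b) (Finsupp.mem_support_iff.mpr hne')
    · show S10 (fun p => p.1) (dOp μ) = n
      omega
    · have goal2 : S10 (fun p => p.2) (dOp μ) + 1 = S10 (fun _ => 1) (dOp μ) := by omega
      rw [S10_one] at goal2; exact goal2
  · -- part B
    intro m hm mβ hmβ hfilter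
    obtain ⟨hm00, hm10, hmc, hm1s, hm2s⟩ := hm
    obtain ⟨hb00, hb10, hbc, hb1s, hb2s⟩ := hmβ
    set α := m.filter (fun p : ℕ × ℕ => 2 ≤ p.1 + p.2) with hαdef
    have hdm : m = α + Finsupp.single (0,1) (m (0,1)) := atilde_decomp10 hm00 hm10
    have hdβ : mβ = μ + Finsupp.single (0,1) (mβ (0,1)) := by
      rw [← hfilter]; exact atilde_decomp10 hb00 hb10
    have hmα : ∀ a b : ℕ, 2 ≤ a + b → m (a, b) = α (a, b) :=
      fun a b h => (Finsupp.filter_apply_pos (fun p : ℕ×ℕ => 2 ≤ p.1 + p.2) m h).symm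
    have hcm := congrArg (S10 fun _ => 1) hdm
    have hcβ := congrArg (S10 fun _ => 1) hdβ
    rw [S10_add, S10_single, one_mul] at hcm hcβ
    have hmc' : S10 (fun _ => 1) m + 1 = n := by rw [S10_one]; exact hmc
    have hbc' : S10 (fun _ => 1) mβ + 1 = n + 1 := by rw [S10_one]; exact hbc
    refine ⟨?_, ?_, ?_⟩
    · -- (i)
      intro lt rt
      constructor
      · rintro ⟨⟨h2, h1⟩, hp⟩
        have hle : Finsupp.single (lt, rt) 1 ≤
            m + Finsupp.single (0,1) 1 + Finsupp.single (lt+1, rt) 1 := by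
          rw [Finsupp.single_le_iff, Finsupp.add_apply, Finsupp.add_apply,
            Finsupp.single_apply, Finsupp.single_apply]
          split_ifs <;> omega
        rw [plusOp, sub_single_eq_iff10 hle] at hp
        have Eα : α + Finsupp.single (lt+1, rt) 1 = μ + Finsupp.single (lt, rt) 1 := by
          have h' := congrArg (Finsupp.filter fun p : ℕ×ℕ => 2 ≤ p.1 + p.2) hp
          rw [Finsupp.filter_add, Finsupp.filter_add, Finsupp.filter_add, hfilter,
            Finsupp.filter_single_of_neg (p := fun p : ℕ×ℕ => 2 ≤ p.1 + p.2) (by norm_num),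
            Finsupp.filter_single_of_pos (p := fun p : ℕ×ℕ => 2 ≤ p.1 + p.2)
              (show 2 ≤ (lt+1) + rt by omega),
            Finsupp.filter_single_of_pos (p := fun p : ℕ×ℕ => 2 ≤ p.1 + p.2)
              (show 2 ≤ lt + rt from h2), add_zero] at h'
          exact h'
        have hμB : 1 ≤ μ (lt+1, rt) := by
          have h' := DFunLike.congr_fun Eα (lt+1, rt)
          rw [Finsupp.add_apply, Finsupp.add_apply, Finsupp.single_apply,
            Finsupp.single_apply, if_pos rfl, if_neg (by simp only [Prod.mk.injEq]; omega)] at h'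
          omega
        refine ⟨⟨by omega, by omega, hμB⟩, ?_⟩
        have hle' : Finsupp.single (lt+1, rt) 1 ≤ μ + Finsupp.single (lt, rt) 1 := by
          rw [Finsupp.single_le_iff, Finsupp.add_apply, Finsupp.single_apply]
          split_ifs <;> omega
        rw [minusOp, Nat.add_sub_cancel, sub_single_eq_iff10 hle']
        exact Eα.symm
      · rintro ⟨⟨-, h3, hμB⟩, hmo⟩
        have hle' : Finsupp.single (lt+1, rt) 1 ≤ μ + Finsupp.single (lt, rt) 1 := by
          rw [Finsupp.single_le_iff, Finsupp.add_apply, Finsupp.single_apply]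
          split_ifs <;> omega
        rw [minusOp, Nat.add_sub_cancel, sub_single_eq_iff10 hle'] at hmo
        have h2 : 2 ≤ lt + rt := by omega
        have hα1 : 1 ≤ α (lt, rt) := by
          have h' := DFunLike.congr_fun hmo (lt, rt)
          rw [Finsupp.add_apply, Finsupp.add_apply, Finsupp.single_apply,
            Finsupp.single_apply, if_pos rfl, if_neg (by simp only [Prod.mk.injEq]; omega)] at h'
          omega
        have hm1 : 1 ≤ m (lt, rt) := by rw [hmα lt rt h2]; exact hα1
        refine ⟨⟨h2, hm1⟩, ?_⟩
        have hle : Finsupp.single (lt, rt) 1 ≤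
            m + Finsupp.single (0,1) 1 + Finsupp.single (lt+1, rt) 1 := by
          rw [Finsupp.single_le_iff, Finsupp.add_apply, Finsupp.add_apply,
            Finsupp.single_apply, Finsupp.single_apply]
          split_ifs <;> omega
        rw [plusOp, sub_single_eq_iff10 hle]
        have hEc := congrArg (S10 fun _ => 1) hmo
        simp only [S10_add, S10_single, mul_one] at hEc
        have hc : mβ (0,1) = m (0,1) + 1 := by omega
        rw [hdm, hdβ, hc, Finsupp.single_add]
        rw [show α + Finsupp.single (0,1) (m (0,1)) + Finsupp.single ((0:ℕ),(1:ℕ)) 1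
              + Finsupp.single (lt+1, rt) 1
            = (μ + Finsupp.single (lt, rt) 1)
              + (Finsupp.single (0,1) (m (0,1)) + Finsupp.single ((0:ℕ),(1:ℕ)) 1) from by
          rw [hmo]; abel]
        abel
    · -- (ii)
      intro lh rt
      constructor
      · rintro ⟨⟨h2, -, hne20, h1⟩, ht⟩
        have hle : Finsupp.single (lh+1, rt) 1 ≤
            m + Finsupp.single (2,0) 1 + Finsupp.single (lh, rt+1) 1 := by
          rw [Finsupp.single_le_iff, Finsupp.add_apply, Finsupp.add_apply,
            Finsupp.single_apply, Finsupp.single_apply]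
          split_ifs <;> omega
        rw [tOp, Nat.add_sub_cancel, sub_single_eq_iff10 hle] at ht
        have Eα : α + Finsupp.single (2,0) 1 + Finsupp.single (lh, rt+1) 1
            = μ + Finsupp.single (lh+1, rt) 1 := by
          have h' := congrArg (Finsupp.filter fun p : ℕ×ℕ => 2 ≤ p.1 + p.2) ht
          rw [Finsupp.filter_add, Finsupp.filter_add, Finsupp.filter_add, hfilter,
            Finsupp.filter_single_of_pos (p := fun p : ℕ×ℕ => 2 ≤ p.1 + p.2)
              (show 2 ≤ 2 + 0 by norm_num),
            Finsupp.filter_single_of_pos (p := fun p : ℕ×ℕ => 2 ≤ p.1 + p.2)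
              (show 2 ≤ lh + (rt+1) by omega),
            Finsupp.filter_single_of_pos (p := fun p : ℕ×ℕ => 2 ≤ p.1 + p.2)
              (show 2 ≤ (lh+1) + rt from h2)] at h'
          exact h'
        have hμ20 : 1 ≤ μ (2, 0) := by
          have h' := DFunLike.congr_fun Eα (2, 0)
          rw [Finsupp.add_apply, Finsupp.add_apply, Finsupp.add_apply,
            Finsupp.single_apply, Finsupp.single_apply, Finsupp.single_apply,
            if_pos rfl, if_neg (by simp only [Prod.mk.injEq]; omega), if_neg hne20] at h'
          omega
        have hμC : 1 ≤ μ (lh, rt+1) := by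
          have h' := DFunLike.congr_fun Eα (lh, rt+1)
          rw [Finsupp.add_apply, Finsupp.add_apply, Finsupp.add_apply,
            Finsupp.single_apply, Finsupp.single_apply, Finsupp.single_apply,
            if_pos rfl, if_neg (by simp only [Prod.mk.injEq]; omega),
            if_neg (by simp only [Prod.mk.injEq]; omega)] at h'
          omega
        have hne11 : ((lh:ℕ), rt+1) ≠ ((1:ℕ),(1:ℕ)) := by
          simp only [ne_eq, Prod.mk.injEq] at hne20 ⊢
          omega
        refine ⟨⟨hμ20, by omega, hne11, hμC⟩, ?_⟩
        have hleC : Finsupp.single (lh, rt+1) 1 ≤ μ + Finsupp.single (lh+1, rt) 1 := by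
          rw [Finsupp.single_le_iff, Finsupp.add_apply, Finsupp.single_apply]
          split_ifs <;> omega
        have hle20 : Finsupp.single ((2:ℕ),(0:ℕ)) 1 ≤
            μ + Finsupp.single (lh+1, rt) 1 - Finsupp.single (lh, rt+1) 1 := by
          rw [Finsupp.single_le_iff, Finsupp.tsub_apply, Finsupp.add_apply,
            Finsupp.single_apply, Finsupp.single_apply,
            if_neg (show ((lh:ℕ), rt+1) ≠ ((2:ℕ),(0:ℕ)) by simp only [ne_eq, Prod.mk.injEq]; omega)]
          split_ifs <;> omega
        rw [bOp, Nat.add_sub_cancel, sub_single_eq_iff10 hle20, sub_single_eq_iff10 hleC]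
        rw [show α + Finsupp.single (2,0) 1 + Finsupp.single (lh, rt+1) 1
            = α + Finsupp.single ((2:ℕ),(0:ℕ)) 1 + Finsupp.single (lh, rt+1) 1 from rfl] at Eα
        exact Eα.symm
      · rintro ⟨⟨hμ20, -, hne11, hμC⟩, hb⟩
        have hleC : Finsupp.single (lh, rt+1) 1 ≤ μ + Finsupp.single (lh+1, rt) 1 := by
          rw [Finsupp.single_le_iff, Finsupp.add_apply, Finsupp.single_apply]
          split_ifs <;> omega
        have hle20 : Finsupp.single ((2:ℕ),(0:ℕ)) 1 ≤
            μ + Finsupp.single (lh+1, rt) 1 - Finsupp.single (lh, rt+1) 1 := by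
          rw [Finsupp.single_le_iff, Finsupp.tsub_apply, Finsupp.add_apply,
            Finsupp.single_apply, Finsupp.single_apply,
            if_neg (show ((lh:ℕ), rt+1) ≠ ((2:ℕ),(0:ℕ)) by simp only [ne_eq, Prod.mk.injEq]; omega)]
          split_ifs <;> omega
        rw [bOp, Nat.add_sub_cancel, sub_single_eq_iff10 hle20,
          sub_single_eq_iff10 hleC] at hb
        have h2 : 2 ≤ lh + 1 + rt := by
          have hsup := hμs (lh, rt+1) (Finsupp.mem_support_iff.mpr (by omega))
          have hsup' : 2 ≤ lh + (rt+1) := hsup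
          omega
        have hne20 : ((lh:ℕ)+1, rt) ≠ ((2:ℕ),(0:ℕ)) := by
          simp only [ne_eq, Prod.mk.injEq] at hne11 ⊢
          omega
        have hαD : 1 ≤ α (lh+1, rt) := by
          have h' := DFunLike.congr_fun hb (lh+1, rt)
          rw [Finsupp.add_apply, Finsupp.add_apply, Finsupp.add_apply,
            Finsupp.single_apply, Finsupp.single_apply, Finsupp.single_apply,
            if_pos rfl,
            if_neg (show ¬(((lh:ℕ), rt+1) = ((lh:ℕ)+1, rt)) by
              simp only [Prod.mk.injEq]; omega)] at h'
          by_cases hD : ((2:ℕ),(0:ℕ)) = ((lh:ℕ)+1, rt)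
          · rw [if_pos hD] at h'
            rw [hD] at hμ20
            omega
          · rw [if_neg hD] at h'
            omega
        have hm1 : 1 ≤ m (lh+1, rt) := by rw [hmα (lh+1) rt h2]; exact hαD
        refine ⟨⟨h2, by omega, hne20, hm1⟩, ?_⟩
        have hle : Finsupp.single (lh+1, rt) 1 ≤
            m + Finsupp.single (2,0) 1 + Finsupp.single (lh, rt+1) 1 := by
          rw [Finsupp.single_le_iff, Finsupp.add_apply, Finsupp.add_apply,
            Finsupp.single_apply, Finsupp.single_apply]
          split_ifs <;> omega
        rw [tOp, Nat.add_sub_cancel, sub_single_eq_iff10 hle]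
        have hEc := congrArg (S10 fun _ => 1) hb
        simp only [S10_add, S10_single, mul_one] at hEc
        have hc : mβ (0,1) = m (0,1) := by omega
        rw [hdm, hdβ, hc]
        rw [show α + Finsupp.single (0,1) (m (0,1)) + Finsupp.single ((2:ℕ),(0:ℕ)) 1
              + Finsupp.single (lh, rt+1) 1
            = (μ + Finsupp.single (lh+1, rt) 1) + Finsupp.single (0,1) (m (0,1)) from by
          rw [hb]; abel]
        abel
    · -- (iii)
      constructor
      · intro hm3
        rw [mOp] at hm3
        have Eα : α + Finsupp.single (1,1) 1 = μ := by
          have h' := congrArg (Finsupp.filter fun p : ℕ×ℕ => 2 ≤ p.1 + p.2) hm3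
          rw [Finsupp.filter_add, hfilter,
            Finsupp.filter_single_of_pos (p := fun p : ℕ×ℕ => 2 ≤ p.1 + p.2)
              (show 2 ≤ 1 + 1 by norm_num)] at h'
          exact h'
        have hμ11 : 1 ≤ μ (1, 1) := by
          have h' := DFunLike.congr_fun Eα (1, 1)
          rw [Finsupp.add_apply, Finsupp.single_apply, if_pos rfl] at h'
          omega
        refine ⟨hμ11, ?_⟩
        rw [dOp, sub_single_eq_iff10 (by rwa [Finsupp.single_le_iff])]
        exact Eα.symm
      · rintro ⟨hμ11, hd⟩
        rw [dOp, sub_single_eq_iff10 (by rwa [Finsupp.single_le_iff])] at hd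
        rw [mOp]
        have hEc := congrArg (S10 fun _ => 1) hd
        simp only [S10_add, S10_single, mul_one] at hEc
        have hc : mβ (0,1) = m (0,1) := by omega
        rw [hdm, hdβ, hc, hd]
        abel
end
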